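/- arXiv:1305.4304 — 10 statements merged into one kernel-verified Lean document; each statement's English description precedes it below -/
import Mathlib

section
/- Let V be a finite-dimensional real inner product space (or a space with a nondegenerate symmetric bilinear form g), and let E, S be symmetric (0,2)-tensors on V. Then the Kulkarni–Nomizu product identity g ∧ Q(g,S) = -Q(S,G) holds, where G = (1/2) g ∧ g and Q(A,T) is the Tachibana tensor of a symmetric (0,2)-tensor A acting on a (0,4)-tensor T. -/
open Finset

noncomputable section

variable {ι : Type*}

/-- Kulkarni–Nomizu product of two symmetric (0,2)-tensors. -/
def KN2 (E T : ι → ι → ℝ) : ι → ι → ι → ι → ℝ :=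
  fun a b c d => E a d * T b c + E b c * T a d - E a c * T b d - E b d * T a c

/-- The tensor `G(X₁,X₂,X₃,X₄) = g(X₁,X₄)g(X₂,X₃) - g(X₁,X₃)g(X₂,X₄)`. -/
def Gten (g : ι → ι → ℝ) : ι → ι → ι → ι → ℝ :=
  fun a b c d => g a d * g b c - g a c * g b d

/-- Tachibana tensor `Q(A,T)` of a symmetric (0,2)-tensor `A` and a (0,4)-tensor `T`. -/
def Tach4 (A : ι → ι → ℝ) (T : ι → ι → ι → ι → ℝ) : ι → ι → ι → ι → ι → ι → ℝ :=
  fun h i j k l m =>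
    A h l * T m i j k + A i l * T h m j k + A j l * T h i m k + A k l * T h i j m
    - A h m * T l i j k - A i m * T h l j k - A j m * T h i l k - A k m * T h i j l

/-- Tachibana tensor `Q(A,S)` of two symmetric (0,2)-tensors. -/
def Tach2 (A S : ι → ι → ℝ) : ι → ι → ι → ι → ℝ :=
  fun i j l m => A i l * S j m + A j l * S i m - A i m * S j l - A j m * S i l

/-- Derivation action `B · T` on a (0,4)-tensor:
`(B·T)_{hijklm} = g^{pq}(T_{pijk}B_{qhlm} + T_{hpjk}B_{qilm} + T_{hipk}B_{qjlm} + T_{hijp}B_{qklm})`. -/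
def dotT [Fintype ι] (ginv : ι → ι → ℝ) (B T : ι → ι → ι → ι → ℝ) :
    ι → ι → ι → ι → ι → ι → ℝ :=
  fun h i j k l m => ∑ p, ∑ q, ginv p q *
    (T p i j k * B q h l m + T h p j k * B q i l m + T h i p k * B q j l m + T h i j p * B q k l m)

/-- Derivation action `B · S` on a symmetric (0,2)-tensor. -/
def dotS [Fintype ι] (ginv : ι → ι → ℝ) (B : ι → ι → ι → ι → ℝ) (S : ι → ι → ℝ) :
    ι → ι → ι → ι → ℝ :=
  fun i j l m => ∑ p, ∑ q, ginv p q * (S p j * B q i l m + S i p * B q j l m)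

/-- Ricci contraction of a (0,4)-curvature tensor. -/
def Ricci [Fintype ι] (ginv : ι → ι → ℝ) (R : ι → ι → ι → ι → ℝ) : ι → ι → ℝ :=
  fun i j => ∑ p, ∑ q, ginv p q * R p i j q

/-- Scalar curvature: full trace of a (0,2)-tensor. -/
def scal [Fintype ι] (ginv : ι → ι → ℝ) (S : ι → ι → ℝ) : ℝ := ∑ i, ∑ j, ginv i j * S i j

/-- Symmetries of a generalized curvature tensor. -/
def IsCurv (R : ι → ι → ι → ι → ℝ) : Prop :=
  (∀ a b c d, R a b c d = - R b a c d) ∧ (∀ a b c d, R a b c d = R c d a b) ∧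
  (∀ a b c d, R a b c d + R b c a d + R c a b d = 0)

/-- `ginv` is a two-sided inverse of the metric `g`. -/
def IsInv [Fintype ι] [DecidableEq ι] (g ginv : ι → ι → ℝ) : Prop :=
  (∀ i j, ∑ k, g i k * ginv k j = if i = j then (1:ℝ) else 0) ∧
  (∀ i j, ∑ k, ginv i k * g k j = if i = j then (1:ℝ) else 0)

/-- The Weyl conformal curvature tensor in dimension `d`:
`C = R - (1/(d-2)) g∧S + (κ/(2(d-1)(d-2))) g∧g`. -/
def Weyl (d : ℕ) (g : ι → ι → ℝ) (R : ι → ι → ι → ι → ℝ) (S : ι → ι → ℝ) (κ : ℝ) :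
    ι → ι → ι → ι → ℝ :=
  fun a b c d' => R a b c d' - (1/((d:ℝ)-2)) * KN2 g S a b c d'
    + (κ/(2*((d:ℝ)-1)*((d:ℝ)-2))) * KN2 g g a b c d'

/-- Kulkarni–Nomizu product of a (0,2)-tensor with a (0,4)-tensor. -/
def KN24 (E : ι → ι → ℝ) (T : ι → ι → ι → ι → ℝ) : ι → ι → ι → ι → ι → ι → ℝ :=
  fun a b c d e f =>
    E a d * T b c e f + E b c * T a d e f - E a c * T b d e f - E b d * T a c e f

/-- The Kulkarni–Nomizu identity `g ∧ Q(g,S) = -Q(S,G)`. -/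
theorem stmt4 {n : ℕ} (g S : Fin n → Fin n → ℝ)
    (hgsym : ∀ i j, g i j = g j i) (hSsym : ∀ i j, S i j = S j i) :
    ∀ h i j k l m, KN24 g (Tach2 g S) h i j k l m = - Tach4 S (Gten g) h i j k l m := by

  intro h i j k l m
  simp only [KN24, Tach2, Tach4, Gten, hgsym i h, hgsym j h, hgsym k h, hgsym l h, hgsym m h, hgsym j i, hgsym k i, hgsym l i, hgsym m i, hgsym k j, hgsym l j, hgsym m j, hgsym l k, hgsym m k, hgsym m l, hSsym i h, hSsym j h, hSsym k h, hSsym l h, hSsym m h, hSsym j i, hSsym k i, hSsym l i, hSsym m i, hSsym k j, hSsym l j, hSsym m j, hSsym l k, hSsym m k, hSsym m l]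
  ring
end
end

section
/- Let B be a generalized curvature tensor on a vector space V with nondegenerate metric g, built as B = (φ/2) S∧S + μ g∧S + η G from a symmetric (0,2)-tensor S (Roter-type expression). If H is a symmetric (0,2)-tensor satisfying H³ = tr(H)·H² + λH (as endomorphisms via g), and R̃ = (ε/2) H∧H + (τ/((n-1)n)) G is the Gauss-equation curvature tensor, then the contraction S̃ of R̃ satisfies S̃∘R̃ = μ(R̃ - (τ/((n-1)n))G) + (τ/((n-1)n))(g ⊙ S̃-terms), i.e. in components S̃_μ^ε R̃_{εβγδ} = μ(R̃_{μβγδ} - (τ/((n-1)n)) G̃_{μβγδ}) + (τ/((n-1)n))(g̃_{βγ}S̃_{μδ} - g̃_{βδ}S̃_{μγ}), where μ = (n-2)τ/((n-1)n) - ελ. -/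
open Finset

noncomputable section

variable {ι : Type*}

/-- Algebraic Gauss-equation identity (Theorem 6.1(i)): if `H` satisfies
`h³ = tr(h) h² + λ h` and `R̃ = (ε/2) H∧H + (τ/((n-1)n)) G̃` (with `m = n-1` the
dimension), then `S̃_μ^e R̃_{eβγδ} = μ(R̃_{μβγδ} - (τ/((n-1)n)) G̃_{μβγδ})
+ (τ/((n-1)n))(g̃_{βγ}S̃_{μδ} - g̃_{βδ}S̃_{μγ})` with `μ = (n-2)τ/((n-1)n) - ελ`. -/
theorem stmt6 {m : ℕ} (hm : 3 ≤ m) (gt gtinv H : Fin m → Fin m → ℝ)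
    (hgsym : ∀ i j, gt i j = gt j i) (hginv : IsInv gt gtinv)
    (hHsym : ∀ i j, H i j = H j i)
    (ε τ lam : ℝ) (hε : ε = 1 ∨ ε = -1)
    (hmat : Matrix (Fin m) (Fin m) ℝ) (hmatdef : hmat = Matrix.of fun i j => ∑ p, gtinv i p * H p j)
    (hcubic : hmat ^ 3 = hmat.trace • hmat ^ 2 + lam • hmat)
    (Rt : Fin m → Fin m → Fin m → Fin m → ℝ)
    (hRt : Rt = fun a b c d => ε / 2 * KN2 H H a b c d + τ / ((m : ℝ) * ((m : ℝ) + 1)) * Gten gt a b c d)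
    (St : Fin m → Fin m → ℝ) (hSt : St = Ricci gtinv Rt) :
    ∀ μ' β γ δ, (∑ p, ∑ q, gtinv p q * St q μ' * Rt p β γ δ) =
      (((m : ℝ) - 1) * τ / ((m : ℝ) * ((m : ℝ) + 1)) - ε * lam) *
        (Rt μ' β γ δ - τ / ((m : ℝ) * ((m : ℝ) + 1)) * Gten gt μ' β γ δ)
      + τ / ((m : ℝ) * ((m : ℝ) + 1)) * (gt β γ * St μ' δ - gt β δ * St μ' γ) := by
  obtain ⟨hinv1, hinv2⟩ := hginv
  intro μ' β γ δ
  set c : ℝ := τ / ((m : ℝ) * ((m : ℝ) + 1)) with hc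
  -- basic matrix facts
  have hGGi : (Matrix.of gt) * (Matrix.of gtinv) = (1 : Matrix (Fin m) (Fin m) ℝ) := by
    ext i j
    simpa [Matrix.mul_apply, Matrix.one_apply] using hinv1 i j
  have hGiG : (Matrix.of gtinv) * (Matrix.of gt) = (1 : Matrix (Fin m) (Fin m) ℝ) := by
    ext i j
    simpa [Matrix.mul_apply, Matrix.one_apply] using hinv2 i j
  have hGmT : (Matrix.of gt).transpose = Matrix.of gt := by
    ext i j; exact hgsym j i
  have hGimT : (Matrix.of gtinv).transpose = Matrix.of gtinv := by
    have h1 : (Matrix.of gt) * (Matrix.of gtinv).transpose = 1 := by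
      have h0 := congrArg Matrix.transpose hGiG
      rwa [Matrix.transpose_mul, Matrix.transpose_one, hGmT] at h0
    calc (Matrix.of gtinv).transpose = ((Matrix.of gtinv) * (Matrix.of gt)) * (Matrix.of gtinv).transpose := by
          rw [hGiG, one_mul]
      _ = (Matrix.of gtinv) * ((Matrix.of gt) * (Matrix.of gtinv).transpose) := by rw [mul_assoc]
      _ = Matrix.of gtinv := by rw [h1, mul_one]
  have hGisym : ∀ i j, gtinv i j = gtinv j i := by
    intro i j
    have := congrArg (fun M => M j i) hGimT
    simpa [Matrix.transpose_apply] using this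
  have hmatEq : hmat = (Matrix.of gtinv) * (Matrix.of H) := by
    rw [hmatdef]; ext i j; simp [Matrix.mul_apply]
  have hGH : (Matrix.of gt) * hmat = Matrix.of H := by
    rw [hmatEq, ← mul_assoc, hGGi, one_mul]
  have hpow2 : (Matrix.of gt) * hmat ^ 2 = (Matrix.of H) * hmat := by
    rw [pow_two, ← mul_assoc, hGH]
  have hpow3 : (Matrix.of gt) * hmat ^ 3 = (Matrix.of H) * hmat * hmat := by
    rw [pow_succ, ← mul_assoc, hpow2]
  have hH3 : (Matrix.of H) * hmat * hmat
      = hmat.trace • ((Matrix.of H) * hmat) + lam • (Matrix.of H) := by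
    rw [← hpow3, ← hpow2, ← hGH, hcubic, mul_add, Matrix.mul_smul, Matrix.mul_smul]
  -- trace identity
  have A1 : (∑ p, ∑ q, gtinv p q * H p q) = hmat.trace := by
    rw [hmatdef]
    simp only [Matrix.trace, Matrix.diag, Matrix.of_apply]
    exact Finset.sum_congr rfl fun p _ => Finset.sum_congr rfl fun q _ => by
      rw [hHsym p q, hGisym p q]
  -- second contraction
  have A2 : ∀ i j, (∑ p, ∑ q, gtinv p q * (H p j * H i q)) = ((Matrix.of H) * hmat) i j := by
    intro i j
    rw [Finset.sum_comm, Matrix.mul_apply]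
    refine Finset.sum_congr rfl fun q _ => ?_
    simp only [hmatdef, Matrix.of_apply, Finset.mul_sum]
    refine Finset.sum_congr rfl fun p _ => ?_
    rw [hGisym p q]; ring
  have A4 : (∑ p, ∑ q, gtinv p q * gt p q) = (m : ℝ) := by
    calc (∑ p, ∑ q, gtinv p q * gt p q) = ∑ p, ∑ q, gtinv p q * gt q p := by
          refine Finset.sum_congr rfl fun p _ => Finset.sum_congr rfl fun q _ => by
            rw [hgsym p q]
      _ = ∑ p : Fin m, (1 : ℝ) := by
          refine Finset.sum_congr rfl fun p _ => by simp [hinv2 p p]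
      _ = (m : ℝ) := by simp
  have A5 : ∀ i j, (∑ p, ∑ q, gtinv p q * (gt p j * gt i q)) = gt i j := by
    intro i j
    rw [Finset.sum_comm]
    have e : ∀ q, (∑ p, gtinv p q * (gt p j * gt i q)) = gt i q * (∑ p, gtinv q p * gt p j) := by
      intro q
      rw [Finset.mul_sum]
      refine Finset.sum_congr rfl fun p _ => by rw [hGisym p q]; ring
    simp only [e, hinv2]
    simp
  -- explicit form of the Ricci tensor
  have hSt' : ∀ i j, St i j
      = ε * (∑ p, ∑ q, gtinv p q * H p q) * H i j
        - ε * (∑ p, ∑ q, gtinv p q * (H p j * H i q))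
        + c * (∑ p, ∑ q, gtinv p q * gt p q) * gt i j
        - c * (∑ p, ∑ q, gtinv p q * (gt p j * gt i q)) := by
    intro i j
    rw [hSt]
    show (∑ p, ∑ q, gtinv p q * Rt p i j q) = _
    have point : ∀ p q : Fin m, gtinv p q * Rt p i j q
        = ε * H i j * (gtinv p q * H p q) - ε * (gtinv p q * (H p j * H i q))
          + c * gt i j * (gtinv p q * gt p q) - c * (gtinv p q * (gt p j * gt i q)) := by
      intro p q
      simp only [hRt, KN2, Gten, ← hc]
      ring
    calc (∑ p, ∑ q, gtinv p q * Rt p i j q)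
        = ∑ p, ∑ q, (ε * H i j * (gtinv p q * H p q) - ε * (gtinv p q * (H p j * H i q))
            + c * gt i j * (gtinv p q * gt p q) - c * (gtinv p q * (gt p j * gt i q))) := by
          exact Finset.sum_congr rfl fun p _ => Finset.sum_congr rfl fun q _ => point p q
      _ = _ := by
          simp only [Finset.sum_add_distrib, Finset.sum_sub_distrib, ← Finset.mul_sum]
          ring
  have hStA : Matrix.of St
      = (ε * hmat.trace) • (Matrix.of H) - ε • ((Matrix.of H) * hmat)
        + (c * ((m : ℝ) - 1)) • (Matrix.of gt) := by
    ext i j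
    have := hSt' i j
    rw [A1, A2 i j, A4, A5 i j] at this
    simp only [Matrix.add_apply, Matrix.sub_apply, Matrix.smul_apply, Matrix.of_apply,
      smul_eq_mul]
    rw [this]; ring
  -- symmetry of St
  have hHmT : (Matrix.of H).transpose = Matrix.of H := by ext i j; exact hHsym j i
  have hM2T : ((Matrix.of H) * hmat).transpose = (Matrix.of H) * hmat := by
    rw [hmatEq, ← mul_assoc, Matrix.transpose_mul, Matrix.transpose_mul, hHmT, hGimT,
      mul_assoc]
  have Stsym : ∀ i j, St i j = St j i := by
    intro i j
    have e1 := congrArg (fun M => M i j) hStA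
    have e2 := congrArg (fun M => M j i) hStA
    simp only [Matrix.add_apply, Matrix.sub_apply, Matrix.smul_apply, Matrix.of_apply,
      smul_eq_mul] at e1 e2
    have eM : ((Matrix.of H) * hmat) i j = ((Matrix.of H) * hmat) j i := by
      have := congrArg (fun M => M j i) hM2T
      simpa [Matrix.transpose_apply] using this
    rw [e1, e2, eM, hHsym i j, hgsym i j]
  -- key matrix identity from the cubic relation
  have h1 : (Matrix.of gtinv) * (Matrix.of St)
      = (ε * hmat.trace) • hmat - ε • (hmat * hmat)
        + (c * ((m : ℝ) - 1)) • (1 : Matrix (Fin m) (Fin m) ℝ) := by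
    rw [hStA, mul_add, mul_sub, Matrix.mul_smul, Matrix.mul_smul, Matrix.mul_smul, hGiG,
      ← hmatEq]
    rw [hmatEq, ← mul_assoc, ← hmatEq]
  have hKey : (Matrix.of H) * ((Matrix.of gtinv) * (Matrix.of St))
      = (c * ((m : ℝ) - 1) - ε * lam) • (Matrix.of H) := by
    rw [h1, mul_add, mul_sub, Matrix.mul_smul, Matrix.mul_smul, Matrix.mul_smul, mul_one,
      ← mul_assoc, hH3]
    ext i j
    simp only [Matrix.add_apply, Matrix.sub_apply, Matrix.smul_apply, Matrix.mul_apply,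
      Matrix.of_apply, smul_eq_mul]
    ring
  -- the two contraction lemmas
  have Kg : ∀ x, (∑ p, ∑ q, gtinv p q * St q μ' * gt p x) = St x μ' := by
    intro x
    rw [Finset.sum_comm]
    have e : ∀ q, (∑ p, gtinv p q * St q μ' * gt p x) = (∑ p, gt x p * gtinv p q) * St q μ' := by
      intro q
      rw [Finset.sum_mul]
      refine Finset.sum_congr rfl fun p _ => by rw [hgsym x p]; ring
    simp only [e, hinv1]
    simp
  have KH : ∀ x, (∑ p, ∑ q, gtinv p q * St q μ' * H p x)
      = (c * ((m : ℝ) - 1) - ε * lam) * H x μ' := by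
    intro x
    have e1 : (∑ p, ∑ q, gtinv p q * St q μ' * H p x)
        = ((Matrix.of H) * ((Matrix.of gtinv) * (Matrix.of St))) x μ' := by
      rw [Matrix.mul_apply]
      refine Finset.sum_congr rfl fun p _ => ?_
      rw [Matrix.mul_apply, Finset.mul_sum]
      refine Finset.sum_congr rfl fun q _ => ?_
      simp only [Matrix.of_apply]
      rw [hHsym p x]; ring
    rw [e1, hKey]
    simp [Matrix.smul_apply]
  -- final assembly
  have expand : ∀ p q : Fin m, gtinv p q * St q μ' * Rt p β γ δ
      = ε * H β γ * (gtinv p q * St q μ' * H p δ) - ε * H β δ * (gtinv p q * St q μ' * H p γ)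
        + c * gt β γ * (gtinv p q * St q μ' * gt p δ)
        - c * gt β δ * (gtinv p q * St q μ' * gt p γ) := by
    intro p q
    simp only [hRt, KN2, Gten, ← hc]
    ring
  calc (∑ p, ∑ q, gtinv p q * St q μ' * Rt p β γ δ)
      = ∑ p, ∑ q, (ε * H β γ * (gtinv p q * St q μ' * H p δ)
          - ε * H β δ * (gtinv p q * St q μ' * H p γ)
          + c * gt β γ * (gtinv p q * St q μ' * gt p δ)
          - c * gt β δ * (gtinv p q * St q μ' * gt p γ)) := by
        exact Finset.sum_congr rfl fun p _ => Finset.sum_congr rfl fun q _ => expand p q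
    _ = ε * H β γ * (∑ p, ∑ q, gtinv p q * St q μ' * H p δ)
          - ε * H β δ * (∑ p, ∑ q, gtinv p q * St q μ' * H p γ)
          + c * gt β γ * (∑ p, ∑ q, gtinv p q * St q μ' * gt p δ)
          - c * gt β δ * (∑ p, ∑ q, gtinv p q * St q μ' * gt p γ) := by
        simp only [Finset.sum_add_distrib, Finset.sum_sub_distrib, ← Finset.mul_sum]
    _ = _ := by
        rw [KH δ, KH γ, Kg δ, Kg γ, Stsym δ μ', Stsym γ μ']
        simp only [hRt, KN2, Gten, ← hc]
        rw [hHsym δ μ', hHsym γ μ', hc]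
        ring
end
end

section
/- In the setting of the previous algebraic Gauss-equation statement, the derived identity R̃ · S̃ = (τ/((n-1)n)) Q(g̃, S̃) holds: the action of the curvature tensor R̃ (as a derivation) on its own Ricci tensor S̃ equals τ/((n-1)n) times the Tachibana tensor Q(g̃,S̃). -/
open Finset
open Matrix

noncomputable section

variable {ι : Type*}

/-- In the algebraic Gauss-equation setting, `R̃·S̃ = (τ/((n-1)n)) Q(g̃,S̃)`. -/
theorem stmt7 {m : ℕ} (hm : 3 ≤ m) (gt gtinv H : Fin m → Fin m → ℝ)
    (hgsym : ∀ i j, gt i j = gt j i) (hginv : IsInv gt gtinv)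
    (hHsym : ∀ i j, H i j = H j i)
    (ε τ lam : ℝ) (hε : ε = 1 ∨ ε = -1)
    (hmat : Matrix (Fin m) (Fin m) ℝ) (hmatdef : hmat = Matrix.of fun i j => ∑ p, gtinv i p * H p j)
    (hcubic : hmat ^ 3 = hmat.trace • hmat ^ 2 + lam • hmat)
    (Rt : Fin m → Fin m → Fin m → Fin m → ℝ)
    (hRt : Rt = fun a b c d => ε / 2 * KN2 H H a b c d + τ / ((m : ℝ) * ((m : ℝ) + 1)) * Gten gt a b c d)
    (St : Fin m → Fin m → ℝ) (hSt : St = Ricci gtinv Rt) :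
    ∀ i j l m', dotS gtinv Rt St i j l m' =
      τ / ((m : ℝ) * ((m : ℝ) + 1)) * Tach2 gt St i j l m' := by
  set c : ℝ := τ / ((m : ℝ) * ((m : ℝ) + 1)) with hc
  set G : Matrix (Fin m) (Fin m) ℝ := Matrix.of gt with hG
  set Gi : Matrix (Fin m) (Fin m) ℝ := Matrix.of gtinv with hGi
  set Hm : Matrix (Fin m) (Fin m) ℝ := Matrix.of H with hHm
  have hGGi : G * Gi = 1 := by
    ext a b; simpa [Matrix.mul_apply, Matrix.one_apply, hG, hGi] using hginv.1 a b
  have hGiG : Gi * G = 1 := by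
    ext a b; simpa [Matrix.mul_apply, Matrix.one_apply, hG, hGi] using hginv.2 a b
  have hGsym : Gᵀ = G := by
    ext a b; exact (hgsym b a)
  have hGisym : Giᵀ = Gi := by
    have h1 : Giᵀ * G = 1 := by
      calc Giᵀ * G = Giᵀ * Gᵀ := by rw [hGsym]
        _ = (G * Gi)ᵀ := by rw [Matrix.transpose_mul]
        _ = 1 := by rw [hGGi, Matrix.transpose_one]
    calc Giᵀ = Giᵀ * (G * Gi) := by rw [hGGi, mul_one]
      _ = (Giᵀ * G) * Gi := by rw [mul_assoc]
      _ = Gi := by rw [h1, one_mul]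
  have ginvsym : ∀ a b, gtinv a b = gtinv b a := by
    intro a b
    have := congrFun (congrFun hGisym a) b
    simpa [Matrix.transpose_apply, hGi] using this.symm
  have hh : hmat = Gi * Hm := by
    rw [hmatdef]; ext a b; simp [Matrix.mul_apply, hGi, hHm]
  -- contraction with identity
  have hdelta : ∀ (a b : Fin m) (f : Fin m → ℝ), ∑ q, (∑ p, gtinv q p * gt p b) * f q = f b := by
    intro a b f
    have : ∀ q, (∑ p, gtinv q p * gt p b) * f q = (if q = b then (1:ℝ) else 0) * f q := by
      intro q; rw [hginv.2 q b]
    rw [Finset.sum_congr rfl (fun q _ => this q)]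
    simp
  -- trace formula
  have htr : hmat.trace = ∑ p, ∑ q, gtinv p q * H p q := by
    rw [hh]
    simp only [Matrix.trace, Matrix.diag, Matrix.mul_apply, hGi, hHm, Matrix.of_apply]
    exact Finset.sum_congr rfl fun p _ => Finset.sum_congr rfl fun q _ => by rw [hHsym]
  -- formula for S̃
  have Sformula : ∀ a b, St a b =
      ε * (hmat.trace * H a b - (Hm * Gi * Hm) a b) + c * ((m:ℝ) - 1) * gt a b := by
    intro a b
    have T2 : ∑ p, ∑ q, gtinv p q * (H p b * H a q) = (Hm * Gi * Hm) a b := by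
      simp only [Matrix.mul_apply, hGi, hHm, Matrix.of_apply, Finset.sum_mul]
      refine Finset.sum_congr rfl fun p _ => Finset.sum_congr rfl fun q _ => by
        rw [ginvsym q p]; ring
    have T3 : ∑ p, ∑ q, gtinv p q * gt p q = (m : ℝ) := by
      have : ∀ p, ∑ q, gtinv p q * gt p q = (if p = p then (1:ℝ) else 0) := by
        intro p
        rw [← hginv.2 p p]
        exact Finset.sum_congr rfl fun q _ => by rw [hgsym]
      rw [Finset.sum_congr rfl (fun p _ => this p)]
      simp
    have T4 : ∑ p, ∑ q, gtinv p q * (gt p b * gt a q) = gt a b := by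
      rw [Finset.sum_comm]
      have : ∀ q, ∑ p, gtinv p q * (gt p b * gt a q) = (∑ p, gtinv q p * gt p b) * gt a q := by
        intro q
        rw [Finset.sum_mul]
        exact Finset.sum_congr rfl fun p _ => by rw [ginvsym q p]; ring
      rw [Finset.sum_congr rfl (fun q _ => this q)]
      have := hdelta a b (fun q => gt a q)
      rw [this, hgsym]
    have expand : St a b = ∑ p, ∑ q,
        (ε * ((gtinv p q * H p q) * H a b) - ε * (gtinv p q * (H p b * H a q))
          + c * ((gtinv p q * gt p q) * gt a b) - c * (gtinv p q * (gt p b * gt a q))) := by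
      rw [hSt]
      simp only [Ricci, hRt, KN2, Gten]
      refine Finset.sum_congr rfl fun p _ => Finset.sum_congr rfl fun q _ => by ring
    rw [expand]
    simp only [Finset.sum_sub_distrib, Finset.sum_add_distrib, ← Finset.mul_sum,
      ← Finset.sum_mul]
    rw [T2, T3, T4, ← htr]
    ring
  -- Sm as a matrix
  set Sm : Matrix (Fin m) (Fin m) ℝ := Matrix.of St with hSm
  have SmEq : Sm = ε • (hmat.trace • Hm - Hm * Gi * Hm) + (c * ((m:ℝ) - 1)) • G := by
    ext a b
    simp only [hSm, Matrix.of_apply, Matrix.add_apply, Matrix.smul_apply, Matrix.sub_apply,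
      smul_eq_mul, hG]
    have e : Hm a b = H a b := rfl
    rw [Sformula a b, e]
    try ring
  have hHmGh : Hm = G * hmat := by
    rw [hh, ← mul_assoc, hGGi, one_mul]
  have hH2 : Hm * Gi * Hm = G * hmat ^ 2 := by
    rw [hHmGh]
    calc G * hmat * Gi * (G * hmat) = G * hmat * (Gi * G) * hmat := by
          simp only [mul_assoc]
      _ = G * hmat ^ 2 := by rw [hGiG, mul_one, mul_assoc, ← pow_two]
  have SmMat : Sm = G * (ε • (hmat.trace • hmat - hmat ^ 2) + (c * ((m:ℝ) - 1)) • 1) := by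
    rw [SmEq, hH2, hHmGh]
    simp only [Matrix.mul_add, Matrix.mul_smul, Matrix.mul_sub, Matrix.mul_one]
  set μ : ℝ := c * ((m:ℝ) - 1) - ε * lam with hμ
  have keymul : hmat * (ε • (hmat.trace • hmat - hmat ^ 2) + (c * ((m:ℝ) - 1)) • 1) = μ • hmat := by
    have h3 : hmat * hmat ^ 2 = hmat ^ 3 := (pow_succ' hmat 2).symm
    simp only [Matrix.mul_add, Matrix.mul_smul, Matrix.mul_sub, Matrix.mul_one]
    rw [show hmat * hmat = hmat ^ 2 from (pow_two hmat).symm] <;> try skip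
    rw [h3, hcubic, hμ]
    module
  have Key : Hm * Gi * Sm = μ • Hm := by
    rw [SmMat, hHmGh]
    calc G * hmat * Gi * (G * (ε • (hmat.trace • hmat - hmat ^ 2) + (c * ((m:ℝ) - 1)) • 1))
        = G * (hmat * ((Gi * G) * (ε • (hmat.trace • hmat - hmat ^ 2) + (c * ((m:ℝ) - 1)) • 1))) := by
          simp only [mul_assoc]
      _ = G * (μ • hmat) := by rw [hGiG, one_mul, keymul]
      _ = μ • (G * hmat) := by rw [Matrix.mul_smul]
  -- contraction lemmas
  have contrC : ∀ a b, ∑ p, ∑ q, gtinv p q * St p a * H q b = μ * H b a := by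
    intro a b
    have lhs : ∑ p, ∑ q, gtinv p q * St p a * H q b = (Hm * Gi * Sm) b a := by
      simp only [Matrix.mul_apply, hGi, hHm, hSm, Matrix.of_apply, Finset.sum_mul]
      refine Finset.sum_congr rfl fun p _ => Finset.sum_congr rfl fun q _ => ?_
      rw [ginvsym q p, hHsym q b]; ring
    rw [lhs, Key]
    simp [hHm]
  have contrD : ∀ a b, ∑ p, ∑ q, gtinv p q * St p a * gt q b = St b a := by
    intro a b
    have step : ∀ p, ∑ q, gtinv p q * St p a * gt q b
        = St p a * (if p = b then (1:ℝ) else 0) := by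
      intro p
      rw [← hginv.2 p b, Finset.mul_sum]
      exact Finset.sum_congr rfl fun q _ => by ring
    rw [Finset.sum_congr rfl (fun p _ => step p)]
    simp
  have Ssym : ∀ a b, St a b = St b a := by
    intro a b
    have hT : (Hm * Gi * Hm)ᵀ = Hm * Gi * Hm := by
      have hHsymM : Hmᵀ = Hm := by ext x y; exact hHsym y x
      rw [Matrix.transpose_mul, Matrix.transpose_mul, hHsymM, hGisym, mul_assoc]
    rw [Sformula a b, Sformula b a, hgsym a b, hHsym a b]
    have := congrFun (congrFun hT b) a
    simp only [Matrix.transpose_apply] at this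
    rw [this]
  -- final computation
  intro i j l m'
  have expand : dotS gtinv Rt St i j l m' = ∑ p, ∑ q,
      ((ε * H i l) * (gtinv p q * St p j * H q m') - (ε * H i m') * (gtinv p q * St p j * H q l)
        + (c * gt i l) * (gtinv p q * St p j * gt q m') - (c * gt i m') * (gtinv p q * St p j * gt q l)
        + (ε * H j l) * (gtinv p q * St p i * H q m') - (ε * H j m') * (gtinv p q * St p i * H q l)
        + (c * gt j l) * (gtinv p q * St p i * gt q m') - (c * gt j m') * (gtinv p q * St p i * gt q l)) := by
    simp only [dotS, hRt, KN2, Gten]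
    refine Finset.sum_congr rfl fun p _ => Finset.sum_congr rfl fun q _ => ?_
    rw [Ssym i p]
    ring
  rw [expand]
  simp only [Finset.sum_sub_distrib, Finset.sum_add_distrib, ← Finset.mul_sum]
  rw [contrC j m', contrC j l, contrD j m', contrD j l,
    contrC i m', contrC i l, contrD i m', contrD i l]
  simp only [Tach2]
  rw [hHsym m' j, hHsym l j, hHsym m' i, hHsym l i,
    Ssym m' j, Ssym l j, Ssym m' i, Ssym l i]
  ring
end
end

section
/- Let (M,g) be an n-dimensional pseudo-Riemannian manifold, n ≥ 4, which is Einstein: S = (κ/n)g with κ constant. Then the difference tensor satisfies R·C - C·R = (κ/((n-1)n)) Q(g,R) = (κ/((n-1)n)) Q(g,C). -/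
open Finset

noncomputable section

variable {ι : Type*}

/-- Einstein manifolds (pointwise algebraic form) satisfy
`R·C - C·R = (κ/((n-1)n)) Q(g,R) = (κ/((n-1)n)) Q(g,C)`. -/
theorem stmt8 {n : ℕ} (hn : 4 ≤ n) (g ginv : Fin n → Fin n → ℝ)
    (hgsym : ∀ i j, g i j = g j i) (hginv : IsInv g ginv)
    (R : Fin n → Fin n → Fin n → Fin n → ℝ) (hR : IsCurv R)
    (S : Fin n → Fin n → ℝ) (hS : S = Ricci ginv R)
    (κ : ℝ) (hκ : κ = scal ginv S)
    (hEin : ∀ i j, S i j = κ / (n : ℝ) * g i j)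
    (C : Fin n → Fin n → Fin n → Fin n → ℝ) (hC : C = Weyl n g R S κ) :
    (∀ h i j k l m, dotT ginv R C h i j k l m - dotT ginv C R h i j k l m =
      κ / (((n : ℝ) - 1) * (n : ℝ)) * Tach4 g R h i j k l m) ∧
    (∀ h i j k l m, dotT ginv R C h i j k l m - dotT ginv C R h i j k l m =
      κ / (((n : ℝ) - 1) * (n : ℝ)) * Tach4 g C h i j k l m) := by
  obtain ⟨hA, hP, hB⟩ := hR
  have hn4 : (4:ℝ) ≤ (n:ℝ) := by exact_mod_cast hn
  have hn0 : (n:ℝ) ≠ 0 := ne_of_gt (by linarith)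
  have hn1 : (n:ℝ) - 1 ≠ 0 := ne_of_gt (by linarith)
  have hn2 : (n:ℝ) - 2 ≠ 0 := ne_of_gt (by linarith)
  set lam : ℝ := -(κ / (2 * ((n:ℝ) - 1) * (n:ℝ))) with hlam
  have hC' : ∀ a b c d, C a b c d = R a b c d + lam * KN2 g g a b c d := by
    intro a b c d
    rw [hC]
    simp only [Weyl, KN2, hEin, hlam]
    field_simp
    ring
  have keycon : ∀ (a : Fin n) (X : Fin n → ℝ),
      (∑ p, ∑ q, ginv p q * (g a p * X q)) = X a := by
    intro a X
    rw [Finset.sum_comm]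
    have h1 : ∀ q ∈ (univ : Finset (Fin n)),
        (∑ p, ginv p q * (g a p * X q)) = (if a = q then (1:ℝ) else 0) * X q := by
      intro q _
      rw [← hginv.1 a q, Finset.sum_mul]
      exact Finset.sum_congr rfl fun p _ => by ring
    rw [Finset.sum_congr rfl h1]
    simp
  have keycon' : ∀ (a : Fin n) (X : Fin n → ℝ),
      (∑ p, ∑ q, ginv p q * (g a q * X p)) = X a := by
    intro a X
    have h1 : ∀ p ∈ (univ : Finset (Fin n)),
        (∑ q, ginv p q * (g a q * X p)) = (if p = a then (1:ℝ) else 0) * X p := by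
      intro p _
      rw [← hginv.2 p a, Finset.sum_mul]
      refine Finset.sum_congr rfl fun q _ => ?_
      rw [hgsym a q]; ring
    rw [Finset.sum_congr rfl h1]
    simp
  have keycon4 : ∀ (a b c d : Fin n) (X Y Z W : Fin n → ℝ),
      (∑ p, ∑ q, ginv p q * (g a p * X q + g b p * Y q + g c p * Z q + g d p * W q))
        = X a + Y b + Z c + W d := by
    intro a b c d X Y Z W
    simp only [mul_add, Finset.sum_add_distrib]
    rw [keycon a X, keycon b Y, keycon c Z, keycon d W]
  have keycon2' : ∀ (a b : Fin n) (X Y : Fin n → ℝ),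
      (∑ p, ∑ q, ginv p q * (g a q * X p + g b q * Y p)) = X a + Y b := by
    intro a b X Y
    simp only [mul_add, Finset.sum_add_distrib]
    rw [keycon' a X, keycon' b Y]
  have hRG : ∀ h i j k l m : Fin n, dotT ginv R (KN2 g g) h i j k l m = 0 := by
    intro h i j k l m
    have step : dotT ginv R (KN2 g g) h i j k l m =
        ∑ p, ∑ q, ginv p q *
          (g k p * (2 * g i j * R q h l m - 2 * g h j * R q i l m)
           + g j p * (2 * g h k * R q i l m - 2 * g i k * R q h l m)
           + g i p * (2 * g h k * R q j l m - 2 * g h j * R q k l m)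
           + g h p * (2 * g i j * R q k l m - 2 * g i k * R q j l m)) := by
      simp only [dotT, KN2]
      refine Finset.sum_congr rfl fun p _ => Finset.sum_congr rfl fun q _ => ?_
      simp only [hgsym p k, hgsym p j]
      ring
    rw [step]
    refine Eq.trans (keycon4 k j i h
      (fun q => 2 * g i j * R q h l m - 2 * g h j * R q i l m)
      (fun q => 2 * g h k * R q i l m - 2 * g i k * R q h l m)
      (fun q => 2 * g h k * R q j l m - 2 * g h j * R q k l m)
      (fun q => 2 * g i j * R q k l m - 2 * g i k * R q j l m)) ?_
    linear_combination (2*g i j) * hA k h l m + (2*g h k) * hA j i l m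
      + (-2*g h j) * hA k i l m + (-2*g i k) * hA j h l m
  have hGR : ∀ h i j k l m : Fin n,
      dotT ginv (KN2 g g) R h i j k l m = 2 * Tach4 g R h i j k l m := by
    intro h i j k l m
    have step : dotT ginv (KN2 g g) R h i j k l m =
        ∑ p, ∑ q, ginv p q *
          (g l q * (-(2 * g h m * R p i j k) - 2 * g i m * R h p j k
              - 2 * g j m * R h i p k - 2 * g k m * R h i j p)
           + g m q * (2 * g h l * R p i j k + 2 * g i l * R h p j k
              + 2 * g j l * R h i p k + 2 * g k l * R h i j p)) := by
      simp only [dotT, KN2]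
      refine Finset.sum_congr rfl fun p _ => Finset.sum_congr rfl fun q _ => ?_
      simp only [hgsym q l, hgsym q m]
      ring
    rw [step]
    refine Eq.trans (keycon2' l m
      (fun p => -(2 * g h m * R p i j k) - 2 * g i m * R h p j k
          - 2 * g j m * R h i p k - 2 * g k m * R h i j p)
      (fun p => 2 * g h l * R p i j k + 2 * g i l * R h p j k
          + 2 * g j l * R h i p k + 2 * g k l * R h i j p)) ?_
    simp only [Tach4]
    ring
  have P1 : ∀ h i j k l m : Fin n,
      dotT ginv R C h i j k l m - dotT ginv C R h i j k l m =
        κ / (((n : ℝ) - 1) * (n : ℝ)) * Tach4 g R h i j k l m := by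
    intro h i j k l m
    have e1 : dotT ginv R C h i j k l m =
        dotT ginv R R h i j k l m + lam * dotT ginv R (KN2 g g) h i j k l m := by
      simp only [dotT, Finset.mul_sum, ← Finset.sum_add_distrib]
      refine Finset.sum_congr rfl fun p _ => Finset.sum_congr rfl fun q _ => ?_
      simp only [hC']; ring
    have e2 : dotT ginv C R h i j k l m =
        dotT ginv R R h i j k l m + lam * dotT ginv (KN2 g g) R h i j k l m := by
      simp only [dotT, Finset.mul_sum, ← Finset.sum_add_distrib]
      refine Finset.sum_congr rfl fun p _ => Finset.sum_congr rfl fun q _ => ?_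
      simp only [hC']; ring
    rw [e1, e2, hRG h i j k l m, hGR h i j k l m, hlam]
    field_simp
    ring
  have hQG : ∀ h i j k l m : Fin n, Tach4 g (KN2 g g) h i j k l m = 0 := by
    intro h i j k l m
    simp only [Tach4, KN2]
    simp only [hgsym m k, hgsym m j, hgsym l k, hgsym l j]
    ring
  refine ⟨P1, fun h i j k l m => ?_⟩
  have hTC : Tach4 g C h i j k l m = Tach4 g R h i j k l m := by
    have h0 := hQG h i j k l m
    simp only [Tach4, KN2] at h0
    simp only [Tach4, hC', KN2]
    linear_combination lam * h0
  rw [hTC]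
  exact P1 h i j k l m
end
end

section
/- For any pseudo-Riemannian manifold (M,g) of dimension n ≥ 4, the identity (n-2)(R·C - C·R) = Q(S,R) - (κ/(n-1)) Q(g,R) + P holds, where P is the (0,6)-tensor built from the tensor V_{hijk} = S_h^l R_{lijk} by P_{hijklm} = g_{hl}V_{mijk} - g_{hm}V_{lijk} - g_{il}V_{mhjk} + g_{im}V_{lhjk} + g_{jl}V_{mkhi} - g_{jm}V_{lkhi} - g_{kl}V_{mjhi} + g_{km}V_{ljhi} - g_{ij}(V_{hklm}+V_{khlm}) - g_{hk}(V_{ijlm}+V_{jilm}) + g_{ik}(V_{hjlm}+V_{jhlm}) + g_{hj}(V_{iklm}+V_{kilm}). -/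
open Finset

noncomputable section

variable {ι : Type*}

/-- The (0,4)-tensor `V_{hijk} = S_h^l R_{lijk}`. -/
def Vten {n : ℕ} (ginv S : Fin n → Fin n → ℝ) (R : Fin n → Fin n → Fin n → Fin n → ℝ) :
    Fin n → Fin n → Fin n → Fin n → ℝ :=
  fun h i j k => ∑ l, ∑ q, ginv l q * S q h * R l i j k

/-- The auxiliary (0,6)-tensor `P` built from `V`. -/
def Pten {n : ℕ} (g : Fin n → Fin n → ℝ) (V : Fin n → Fin n → Fin n → Fin n → ℝ) :
    Fin n → Fin n → Fin n → Fin n → Fin n → Fin n → ℝ :=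
  fun h i j k l m =>
    g h l * V m i j k - g h m * V l i j k - g i l * V m h j k + g i m * V l h j k
    + g j l * V m k h i - g j m * V l k h i - g k l * V m j h i + g k m * V l j h i
    - g i j * (V h k l m + V k h l m) - g h k * (V i j l m + V j i l m)
    + g i k * (V h j l m + V j h l m) + g h j * (V i k l m + V k i l m)

namespace Stmt9Aux

variable {n : ℕ}

lemma ginv_symm {g ginv : Fin n → Fin n → ℝ} (hgsym : ∀ i j, g i j = g j i)
    (hginv : IsInv g ginv) : ∀ i j, ginv i j = ginv j i := by
  intro i j
  have r1 : (∑ k, ∑ l, ginv k j * g k l * ginv l i) = ginv i j := by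
    have e : ∀ k, (∑ l, ginv k j * g k l * ginv l i)
        = ginv k j * (if k = i then (1:ℝ) else 0) := by
      intro k
      rw [show (∑ l, ginv k j * g k l * ginv l i) = ginv k j * ∑ l, g k l * ginv l i from by
        rw [Finset.mul_sum]; exact Finset.sum_congr rfl fun l _ => by ring]
      rw [hginv.1 k i]
    rw [Finset.sum_congr rfl fun k _ => e k]
    simp
  have r2 : (∑ k, ∑ l, ginv k j * g k l * ginv l i) = ginv j i := by
    rw [Finset.sum_comm]
    have e : ∀ l, (∑ k, ginv k j * g k l * ginv l i)
        = (if l = j then (1:ℝ) else 0) * ginv l i := by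
      intro l
      rw [show (∑ k, ginv k j * g k l * ginv l i) = (∑ k, g l k * ginv k j) * ginv l i from by
        rw [Finset.sum_mul]; exact Finset.sum_congr rfl fun k _ => by rw [hgsym k l]; ring]
      rw [hginv.1 l j]
    rw [Finset.sum_congr rfl fun l _ => e l]
    simp
  rw [← r1, r2]

lemma C1 {g ginv : Fin n → Fin n → ℝ} (hginv : IsInv g ginv) (f : Fin n → ℝ) (a : Fin n) :
    ∑ p, ∑ q, ginv p q * g q a * f p = f a := by
  have e : ∀ p, ∑ q, ginv p q * g q a * f p = (if p = a then (1:ℝ) else 0) * f p := by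
    intro p
    rw [← Finset.sum_mul, hginv.2 p a]
  rw [Finset.sum_congr rfl fun p _ => e p]
  simp

lemma C2 {g ginv : Fin n → Fin n → ℝ} (hgsym : ∀ i j, g i j = g j i)
    (hginv : IsInv g ginv) (f : Fin n → ℝ) (a : Fin n) :
    ∑ p, ∑ q, ginv p q * g p a * f q = f a := by
  rw [Finset.sum_comm]
  have e : ∀ q, ∑ p, ginv p q * g p a * f q = (if a = q then (1:ℝ) else 0) * f q := by
    intro q
    have e2 : ∀ p, ginv p q * g p a * f q = g a p * ginv p q * f q := by
      intro p; rw [hgsym p a]; ring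
    rw [Finset.sum_congr rfl fun p _ => e2 p, ← Finset.sum_mul, hginv.1 a q]
  rw [Finset.sum_congr rfl fun q _ => e q]
  simp

lemma Ricci_symm {ginv : Fin n → Fin n → ℝ}
    (hgis : ∀ i j, ginv i j = ginv j i)
    {R : Fin n → Fin n → Fin n → Fin n → ℝ} (hR : IsCurv R) (i j : Fin n) :
    Ricci ginv R i j = Ricci ginv R j i := by
  have h0 : ∀ c d : Fin n, ∑ p, ∑ q, ginv p q * R p q c d = 0 := by
    intro c d
    have e : (∑ p, ∑ q, ginv p q * R p q c d) = -(∑ p, ∑ q, ginv p q * R p q c d) := by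
      conv_lhs => rw [Finset.sum_comm]
      calc (∑ a, ∑ b, ginv b a * R b a c d)
          = ∑ a, ∑ b, -(ginv a b * R a b c d) :=
            Finset.sum_congr rfl fun a _ => Finset.sum_congr rfl fun b _ => by
              rw [hgis b a, hR.1 b a c d]; ring
        _ = -(∑ a, ∑ b, ginv a b * R a b c d) := by
            simp [Finset.sum_neg_distrib]
    linarith
  have key : ∀ p q, ginv p q * R p i j q = -(ginv p q * R p q i j) + ginv p q * R p j i q := by
    intro p q
    have hb := hR.2.2 p i j q
    have hp := hR.2.1 i j p q
    have ha := hR.1 j p i q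
    linear_combination ginv p q * hb - ginv p q * hp - ginv p q * ha
  show (∑ p, ∑ q, ginv p q * R p i j q) = ∑ p, ∑ q, ginv p q * R p j i q
  rw [Finset.sum_congr rfl fun p (_ : p ∈ Finset.univ) =>
    Finset.sum_congr rfl fun q _ => key p q]
  simp only [Finset.sum_add_distrib, Finset.sum_neg_distrib]
  rw [h0 i j]
  ring

lemma VS1 {ginv S : Fin n → Fin n → ℝ} {R : Fin n → Fin n → Fin n → Fin n → ℝ}
    (a b c d : Fin n) :
    ∑ p, ∑ q, ginv p q * S q a * R p b c d = Vten ginv S R a b c d := rfl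

lemma VS1' {ginv S : Fin n → Fin n → ℝ} (hgis : ∀ i j, ginv i j = ginv j i)
    {R : Fin n → Fin n → Fin n → Fin n → ℝ} (a b c d : Fin n) :
    ∑ p, ∑ q, ginv p q * S p a * R q b c d = Vten ginv S R a b c d := by
  rw [Finset.sum_comm]
  calc (∑ q, ∑ p, ginv p q * S p a * R q b c d)
      = ∑ q, ∑ p, ginv q p * S p a * R q b c d :=
        Finset.sum_congr rfl fun q _ => Finset.sum_congr rfl fun p _ => by rw [hgis p q]
    _ = Vten ginv S R a b c d := rfl

lemma VS2 {ginv S : Fin n → Fin n → ℝ} {R : Fin n → Fin n → Fin n → Fin n → ℝ}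
    (hR : IsCurv R) (a b c d : Fin n) :
    ∑ p, ∑ q, ginv p q * S q a * R b p c d = -Vten ginv S R a b c d := by
  have key : ∀ p q, ginv p q * S q a * R b p c d = -(ginv p q * S q a * R p b c d) := by
    intro p q; rw [hR.1 b p c d]; ring
  simp only [key, Finset.sum_neg_distrib]
  rfl

lemma VS3 {ginv S : Fin n → Fin n → ℝ} {R : Fin n → Fin n → Fin n → Fin n → ℝ}
    (hR : IsCurv R) (a b c d : Fin n) :
    ∑ p, ∑ q, ginv p q * S q a * R b c p d = Vten ginv S R a d b c := by
  have key : ∀ p q, ginv p q * S q a * R b c p d = ginv p q * S q a * R p d b c := by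
    intro p q; rw [hR.2.1 b c p d]
  simp only [key]
  rfl

lemma VS4 {ginv S : Fin n → Fin n → ℝ} {R : Fin n → Fin n → Fin n → Fin n → ℝ}
    (hR : IsCurv R) (a b c d : Fin n) :
    ∑ p, ∑ q, ginv p q * S q a * R b c d p = -Vten ginv S R a d b c := by
  have key : ∀ p q, ginv p q * S q a * R b c d p = -(ginv p q * S q a * R p d b c) := by
    intro p q; rw [hR.2.1 b c d p, hR.1 d p b c]; ring
  simp only [key, Finset.sum_neg_distrib]
  rfl

lemma eval_B1 {g ginv S : Fin n → Fin n → ℝ} (hginv : IsInv g ginv)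
    {R : Fin n → Fin n → Fin n → Fin n → ℝ} (hR : IsCurv R) (h i j k l m : Fin n) :
    dotT ginv (KN2 g S) R h i j k l m =
      Tach4 S R h i j k l m
      + g h l * Vten ginv S R m i j k - g h m * Vten ginv S R l i j k
      - g i l * Vten ginv S R m h j k + g i m * Vten ginv S R l h j k
      + g j l * Vten ginv S R m k h i - g j m * Vten ginv S R l k h i
      - g k l * Vten ginv S R m j h i + g k m * Vten ginv S R l j h i := by
  have key : ∀ p q, ginv p q * (R p i j k * KN2 g S q h l m + R h p j k * KN2 g S q i l m
      + R h i p k * KN2 g S q j l m + R h i j p * KN2 g S q k l m) =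
      S h l * (ginv p q * g q m * R p i j k) + g h l * (ginv p q * S q m * R p i j k)
      - S h m * (ginv p q * g q l * R p i j k) - g h m * (ginv p q * S q l * R p i j k)
      + S i l * (ginv p q * g q m * R h p j k) + g i l * (ginv p q * S q m * R h p j k)
      - S i m * (ginv p q * g q l * R h p j k) - g i m * (ginv p q * S q l * R h p j k)
      + S j l * (ginv p q * g q m * R h i p k) + g j l * (ginv p q * S q m * R h i p k)
      - S j m * (ginv p q * g q l * R h i p k) - g j m * (ginv p q * S q l * R h i p k)
      + S k l * (ginv p q * g q m * R h i j p) + g k l * (ginv p q * S q m * R h i j p)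
      - S k m * (ginv p q * g q l * R h i j p) - g k m * (ginv p q * S q l * R h i j p) := by
    intro p q; simp only [KN2]; ring
  simp only [dotT, key]
  simp only [Finset.sum_add_distrib, Finset.sum_sub_distrib, ← Finset.mul_sum]
  simp only [C1 hginv, VS1 (ginv := ginv) (S := S) (R := R), VS2 hR, VS3 hR, VS4 hR]
  simp only [Tach4]
  ring

lemma eval_A1 {g ginv S : Fin n → Fin n → ℝ} (hgsym : ∀ i j, g i j = g j i)
    (hginv : IsInv g ginv) (hgis : ∀ i j, ginv i j = ginv j i)
    (hS2 : ∀ a b, S a b = S b a)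
    {R : Fin n → Fin n → Fin n → Fin n → ℝ} (hR : IsCurv R) (h i j k l m : Fin n) :
    dotT ginv R (KN2 g S) h i j k l m =
      g i j * (Vten ginv S R k h l m + Vten ginv S R h k l m)
      + g h k * (Vten ginv S R j i l m + Vten ginv S R i j l m)
      - g i k * (Vten ginv S R j h l m + Vten ginv S R h j l m)
      - g h j * (Vten ginv S R k i l m + Vten ginv S R i k l m) := by
  have key : ∀ p q, ginv p q * (KN2 g S p i j k * R q h l m + KN2 g S h p j k * R q i l m
      + KN2 g S h i p k * R q j l m + KN2 g S h i j p * R q k l m) =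
      S i j * (ginv p q * g p k * R q h l m) + g i j * (ginv p q * S p k * R q h l m)
      - S i k * (ginv p q * g p j * R q h l m) - g i k * (ginv p q * S p j * R q h l m)
      + g h k * (ginv p q * S p j * R q i l m) + S h k * (ginv p q * g p j * R q i l m)
      - g h j * (ginv p q * S p k * R q i l m) - S h j * (ginv p q * g p k * R q i l m)
      + g h k * (ginv p q * S p i * R q j l m) + S h k * (ginv p q * g p i * R q j l m)
      - S i k * (ginv p q * g p h * R q j l m) - g i k * (ginv p q * S p h * R q j l m)
      + S i j * (ginv p q * g p h * R q k l m) + g i j * (ginv p q * S p h * R q k l m)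
      - g h j * (ginv p q * S p i * R q k l m) - S h j * (ginv p q * g p i * R q k l m) := by
    intro p q
    simp only [KN2]
    rw [hS2 i p, hS2 h p, hgsym i p, hgsym h p]
    ring
  simp only [dotT, key]
  simp only [Finset.sum_add_distrib, Finset.sum_sub_distrib, ← Finset.mul_sum]
  simp only [C2 hgsym hginv, VS1' (S := S) hgis (R := R)]
  rw [hR.1 k h l m, hR.1 j h l m, hR.1 j i l m, hR.1 k i l m]
  ring

lemma Vg {g ginv : Fin n → Fin n → ℝ} (hginv : IsInv g ginv)
    {R : Fin n → Fin n → Fin n → Fin n → ℝ} (a b c d : Fin n) :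
    Vten ginv g R a b c d = R a b c d :=
  C1 hginv (fun p => R p b c d) a

lemma split {g ginv : Fin n → Fin n → ℝ}
    {R : Fin n → Fin n → Fin n → Fin n → ℝ} {S : Fin n → Fin n → ℝ} {κ : ℝ}
    {C : Fin n → Fin n → Fin n → Fin n → ℝ} (hC : C = Weyl n g R S κ) (h i j k l m : Fin n) :
    dotT ginv R C h i j k l m - dotT ginv C R h i j k l m =
      -((1:ℝ)/((n:ℝ)-2)) * dotT ginv R (KN2 g S) h i j k l m
      + (κ/(2*((n:ℝ)-1)*((n:ℝ)-2))) * dotT ginv R (KN2 g g) h i j k l m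
      + ((1:ℝ)/((n:ℝ)-2)) * dotT ginv (KN2 g S) R h i j k l m
      - (κ/(2*((n:ℝ)-1)*((n:ℝ)-2))) * dotT ginv (KN2 g g) R h i j k l m := by
  subst hC
  simp only [dotT, Weyl, Finset.mul_sum, neg_mul, ← Finset.sum_neg_distrib,
    ← Finset.sum_add_distrib, ← Finset.sum_sub_distrib]
  refine Finset.sum_congr rfl fun p _ => ?_
  refine Finset.sum_congr rfl fun q _ => ?_
  ring

end Stmt9Aux

/-- The universal identity `(n-2)(R·C - C·R) = Q(S,R) - (κ/(n-1)) Q(g,R) + P`. -/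
theorem stmt9 {n : ℕ} (hn : 4 ≤ n) (g ginv : Fin n → Fin n → ℝ)
    (hgsym : ∀ i j, g i j = g j i) (hginv : IsInv g ginv)
    (R : Fin n → Fin n → Fin n → Fin n → ℝ) (hR : IsCurv R)
    (S : Fin n → Fin n → ℝ) (hS : S = Ricci ginv R)
    (κ : ℝ) (hκ : κ = scal ginv S)
    (C : Fin n → Fin n → Fin n → Fin n → ℝ) (hC : C = Weyl n g R S κ) :
    ∀ h i j k l m, ((n : ℝ) - 2) * (dotT ginv R C h i j k l m - dotT ginv C R h i j k l m) =
      Tach4 S R h i j k l m - κ / ((n : ℝ) - 1) * Tach4 g R h i j k l m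
      + Pten g (Vten ginv S R) h i j k l m := by
  intro h i j k l m
  have hgis := Stmt9Aux.ginv_symm hgsym hginv
  have hS2 : ∀ a b, S a b = S b a := by
    intro a b; rw [hS]; exact Stmt9Aux.Ricci_symm hgis hR a b
  have hR4 : ∀ a b c d, R a b c d = -R a b d c := by
    intro a b c d
    rw [hR.2.1 a b c d, hR.1 c d a b, hR.2.1 d c a b]
  have hn4 : (4:ℝ) ≤ (n:ℝ) := by exact_mod_cast hn
  have hn2 : ((n:ℝ) - 2) ≠ 0 := by
    intro hh; linarith
  have hn1 : ((n:ℝ) - 1) ≠ 0 := by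
    intro hh; linarith
  rw [Stmt9Aux.split hC h i j k l m,
      Stmt9Aux.eval_A1 (S := S) hgsym hginv hgis hS2 hR h i j k l m,
      Stmt9Aux.eval_A1 (S := g) hgsym hginv hgis hgsym hR h i j k l m,
      Stmt9Aux.eval_B1 (S := S) hginv hR h i j k l m,
      Stmt9Aux.eval_B1 (S := g) hginv hR h i j k l m]
  simp only [Stmt9Aux.Vg hginv]
  rw [hR.1 k h l m, hR.1 j h l m, hR.1 j i l m, hR.1 k i l m,
      hR.1 m h j k, hR.1 l h j k, hR.2.1 m k h i, hR.2.1 l k h i,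
      hR.2.1 m j h i, hR.2.1 l j h i, hR4 h i m j, hR4 h i l j]
  simp only [Tach4, Pten]
  field_simp
  ring
end
end

section
/- Let (Ñ, g̃) be an (n-1)-dimensional pseudo-Riemannian manifold, n ≥ 4, whose curvature satisfies S̃_μ^ε R̃_{εβγδ} = (κ̃/(n-1)) R̃_{μβγδ} + εa²(g̃_{βγ}S̃_{μδ} - g̃_{βδ}S̃_{μγ}) - (εκ̃a²/(n-1)) G̃_{μβγδ} (condition (SR2)). Then Ñ is Ricci-pseudosymmetric of constant type: R̃·S̃ = εa² Q(g̃, S̃). -/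
open Finset

noncomputable section

variable {ι : Type*}

/-- Condition (SR2) implies Ricci-pseudosymmetry of constant type:
`R̃·S̃ = εa² Q(g̃,S̃)`.  Here the space has dimension `m = n - 1`. -/
theorem stmt12 {m : ℕ} (hm : 3 ≤ m) (gt gtinv : Fin m → Fin m → ℝ)
    (hgsym : ∀ i j, gt i j = gt j i) (hginv : IsInv gt gtinv)
    (Rt : Fin m → Fin m → Fin m → Fin m → ℝ) (hRt : IsCurv Rt)
    (St : Fin m → Fin m → ℝ) (hSt : St = Ricci gtinv Rt)
    (κt : ℝ) (hκt : κt = scal gtinv St)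
    (ε a : ℝ) (hε : ε = 1 ∨ ε = -1)
    (hSR2 : ∀ μ' β γ δ, (∑ p, ∑ q, gtinv p q * St q μ' * Rt p β γ δ) =
      κt / (m : ℝ) * Rt μ' β γ δ
      + ε * a ^ 2 * (gt β γ * St μ' δ - gt β δ * St μ' γ)
      - ε * κt * a ^ 2 / (m : ℝ) * Gten gt μ' β γ δ) :
    ∀ i j l m', dotS gtinv Rt St i j l m' = ε * a ^ 2 * Tach2 gt St i j l m' := by
  obtain ⟨h1, h2⟩ := hginv
  obtain ⟨hA, hP, hB⟩ := hRt
  -- second-pair antisymmetry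
  have hA2 : ∀ a b c d, Rt a b c d = - Rt a b d c := by
    intro a b c d
    rw [hP a b c d, hA c d a b, hP d c a b]
  -- the inverse metric is symmetric
  have hS2 : ∀ k i, (∑ l, gtinv l i * gt l k) = if k = i then (1:ℝ) else 0 := by
    intro k i
    rw [← h1 k i]
    exact Finset.sum_congr rfl fun l _ => by rw [hgsym l k]; ring
  have key : ∀ i j, gtinv i j = ∑ l, ∑ k, gtinv l i * gt l k * gtinv k j := by
    intro i j
    rw [Finset.sum_comm]
    have h3 : ∀ k, (∑ l, gtinv l i * gt l k * gtinv k j)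
        = (if k = i then (1:ℝ) else 0) * gtinv k j := by
      intro k
      rw [← hS2 k i, Finset.sum_mul]
    simp [h3]
  have hinvsym : ∀ i j, gtinv i j = gtinv j i := by
    intro i j
    rw [key i j, key j i, Finset.sum_comm]
    exact Finset.sum_congr rfl fun l _ => Finset.sum_congr rfl fun k _ => by
      rw [hgsym k l]; ring
  -- the Ricci tensor is symmetric
  have hSsym : ∀ i j, St i j = St j i := by
    intro i j
    rw [hSt]
    show (∑ p, ∑ q, gtinv p q * Rt p i j q) = ∑ p, ∑ q, gtinv p q * Rt p j i q
    rw [Finset.sum_comm]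
    refine Finset.sum_congr rfl fun p _ => Finset.sum_congr rfl fun q _ => ?_
    rw [hinvsym q p, hP q i j p, hA j p q i, hA2 p j q i]
    ring
  intro i j l m'
  have e1 : (∑ p, ∑ q, gtinv p q * St q j * Rt p i l m')
      = ∑ p, ∑ q, gtinv p q * (St p j * Rt q i l m') := by
    rw [Finset.sum_comm]
    exact Finset.sum_congr rfl fun p _ => Finset.sum_congr rfl fun q _ => by
      rw [hinvsym q p]; ring
  have e2 : (∑ p, ∑ q, gtinv p q * St q i * Rt p j l m')
      = ∑ p, ∑ q, gtinv p q * (St i p * Rt q j l m') := by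
    rw [Finset.sum_comm]
    exact Finset.sum_congr rfl fun p _ => Finset.sum_congr rfl fun q _ => by
      rw [hinvsym q p, hSsym p i]; ring
  have split : dotS gtinv Rt St i j l m'
      = (∑ p, ∑ q, gtinv p q * St q j * Rt p i l m')
        + (∑ p, ∑ q, gtinv p q * St q i * Rt p j l m') := by
    rw [e1, e2, ← Finset.sum_add_distrib]
    refine Finset.sum_congr rfl fun p _ => ?_
    rw [← Finset.sum_add_distrib]
    exact Finset.sum_congr rfl fun q _ => by ring
  rw [split, hSR2 j i l m', hSR2 i j l m']
  simp only [Gten, Tach2]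
  rw [hA j i l m']
  ring
end
end

section
/- Let R̃ be an algebraic curvature tensor on an (n-1)-dimensional space with metric g̃, n ≥ 5, satisfying condition (SR2): S̃_μ^ε R̃_{εβγδ} = (κ̃/(n-1)) R̃_{μβγδ} + εa²(g̃_{βγ}S̃_{μδ} - g̃_{βδ}S̃_{μγ}) - (εκ̃a²/(n-1)) G̃_{μβγδ}. Then the difference tensor satisfies (n-3)(R̃·C̃ - C̃·R̃) = Q(S̃, R̃) - (κ̃/((n-1)(n-2))) Q(g̃, R̃), where C̃ is the Weyl tensor of R̃. -/
open Finset

noncomputable section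

variable {ι : Type*}

/-- Closed form for the contraction `S·R` given by condition (SR2). -/
def Lc (κ ε a mr : ℝ) (g S : ι → ι → ℝ) (R : ι → ι → ι → ι → ℝ) : ι → ι → ι → ι → ℝ :=
  fun μ β γ δ => κ / mr * R μ β γ δ + ε * a ^ 2 * (g β γ * S μ δ - g β δ * S μ γ)
    - ε * κ * a ^ 2 / mr * (g μ δ * g β γ - g μ γ * g β δ)

set_option maxHeartbeats 3200000 in
/-- Condition (SR2) implies
`(n-3)(R̃·C̃ - C̃·R̃) = Q(S̃,R̃) - (κ̃/((n-1)(n-2))) Q(g̃,R̃)`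
for an algebraic curvature tensor in dimension `m = n - 1`, `n ≥ 5`. -/
theorem stmt13 {m : ℕ} (hm : 4 ≤ m) (gt gtinv : Fin m → Fin m → ℝ)
    (hgsym : ∀ i j, gt i j = gt j i) (hginv : IsInv gt gtinv)
    (Rt : Fin m → Fin m → Fin m → Fin m → ℝ) (hRt : IsCurv Rt)
    (St : Fin m → Fin m → ℝ) (hSt : St = Ricci gtinv Rt)
    (κt : ℝ) (hκt : κt = scal gtinv St)
    (Ct : Fin m → Fin m → Fin m → Fin m → ℝ) (hCt : Ct = Weyl m gt Rt St κt)
    (ε a : ℝ) (hε : ε = 1 ∨ ε = -1)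
    (hSR2 : ∀ μ' β γ δ, (∑ p, ∑ q, gtinv p q * St q μ' * Rt p β γ δ) =
      κt / (m : ℝ) * Rt μ' β γ δ
      + ε * a ^ 2 * (gt β γ * St μ' δ - gt β δ * St μ' γ)
      - ε * κt * a ^ 2 / (m : ℝ) * Gten gt μ' β γ δ) :
    ∀ h i j k l m', ((m : ℝ) - 2) * (dotT gtinv Rt Ct h i j k l m' - dotT gtinv Ct Rt h i j k l m') =
      Tach4 St Rt h i j k l m'
      - κt / ((m : ℝ) * ((m : ℝ) - 1)) * Tach4 gt Rt h i j k l m' := by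
  obtain ⟨ha, hp, hb⟩ := hRt
  obtain ⟨hg1, hg2⟩ := hginv
  -- last-pair antisymmetry
  have hsw2 : ∀ a' b c d, Rt a' b c d = - Rt a' b d c := by
    intro a' b c d
    rw [hp a' b d c, ha d c, hp c d]
    ring
  -- symmetry of the inverse metric
  have hginvsym : ∀ x y, gtinv x y = gtinv y x := by
    intro x y
    have t1 : (∑ k0, ∑ l0, gtinv x k0 * (gtinv y l0 * gt l0 k0)) = gtinv x y := by
      rw [Finset.sum_congr rfl fun k0 _ => by
        rw [← Finset.mul_sum, hg2 y k0]]
      simp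
    have t2 : (∑ k0, ∑ l0, gtinv x k0 * (gtinv y l0 * gt l0 k0)) = gtinv y x := by
      rw [Finset.sum_comm]
      rw [Finset.sum_congr rfl fun l0 _ => by
        rw [show (∑ k0, gtinv x k0 * (gtinv y l0 * gt l0 k0))
            = ∑ k0, gtinv y l0 * (gtinv x k0 * gt k0 l0) from
          Finset.sum_congr rfl fun k0 _ => by rw [hgsym l0 k0]; ring,
          ← Finset.mul_sum, hg2 x l0]]
      simp
    rw [← t1, t2]
  -- symmetry of the Ricci tensor
  have hflip : ∀ a' b c d, Rt a' b c d = Rt b a' d c := by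
    intro a' b c d
    rw [ha a' b, hsw2 b a' c d]
    ring
  have hSsym : ∀ x y, St x y = St y x := by
    intro x y
    rw [hSt]
    simp only [Ricci]
    rw [Finset.sum_comm]
    exact Finset.sum_congr rfl fun q _ => Finset.sum_congr rfl fun p _ => by
      rw [hginvsym p q, hp p x y q, hflip y q p x]
  -- contraction lemmas
  have key1 : ∀ (x : Fin m) (F : Fin m → ℝ), (∑ p, ∑ q, gtinv p q * gt q x * F p) = F x := by
    intro x F
    rw [Finset.sum_congr rfl fun p _ => by
      rw [show (∑ q, gtinv p q * gt q x * F p) = (∑ q, gtinv p q * gt q x) * F p from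
        (Finset.sum_mul _ _ _).symm, hg2 p x]]
    simp
  have key2 : ∀ (x : Fin m) (F : Fin m → ℝ), (∑ p, ∑ q, gtinv p q * gt p x * F q) = F x := by
    intro x F
    rw [Finset.sum_comm]
    rw [Finset.sum_congr rfl fun q _ => by
      rw [show (∑ p, gtinv p q * gt p x * F q) = (∑ p, gt x p * gtinv p q) * F q from by
        rw [Finset.sum_mul]
        exact Finset.sum_congr rfl fun p _ => by rw [hgsym x p]; ring,
        hg1 x q]]
    simp
  set L : Fin m → Fin m → Fin m → Fin m → ℝ := Lc κt ε a (m:ℝ) gt St Rt with hLdef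
  have keyS1 : ∀ μ β γ δ, (∑ p, ∑ q, gtinv p q * St q μ * Rt p β γ δ) = L μ β γ δ := by
    intro μ β γ δ
    rw [hSR2 μ β γ δ, hLdef]
    simp only [Lc, Gten]
  have keyS2 : ∀ μ β γ δ, (∑ p, ∑ q, gtinv p q * St p μ * Rt q β γ δ) = L μ β γ δ := by
    intro μ β γ δ
    rw [← keyS1 μ β γ δ, Finset.sum_comm]
    exact Finset.sum_congr rfl fun q _ => Finset.sum_congr rfl fun p _ => by
      rw [hginvsym p q]
  intro h i j k l m'
  -- the four contraction identities
  have e4 : dotT gtinv (KN2 gt gt) Rt h i j k l m' = 2 * Tach4 gt Rt h i j k l m' := by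
    simp only [dotT]
    rw [Finset.sum_congr rfl fun p _ => Finset.sum_congr rfl fun q _ => show _ =
        2*(gt h l * (gtinv p q * gt q m' * Rt p i j k))
      - 2*(gt h m' * (gtinv p q * gt q l * Rt p i j k))
      + 2*(gt i l * (gtinv p q * gt q m' * Rt h p j k))
      - 2*(gt i m' * (gtinv p q * gt q l * Rt h p j k))
      + 2*(gt j l * (gtinv p q * gt q m' * Rt h i p k))
      - 2*(gt j m' * (gtinv p q * gt q l * Rt h i p k))
      + 2*(gt k l * (gtinv p q * gt q m' * Rt h i j p))
      - 2*(gt k m' * (gtinv p q * gt q l * Rt h i j p)) from by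
      simp only [KN2]; ring]
    simp only [Finset.sum_add_distrib, Finset.sum_sub_distrib, ← Finset.mul_sum, key1]
    simp only [Tach4]
    ring
  have e3 : dotT gtinv Rt (KN2 gt gt) h i j k l m' = 0 := by
    simp only [dotT]
    rw [Finset.sum_congr rfl fun p _ => Finset.sum_congr rfl fun q _ => show _ =
        2*(gt i j * (gtinv p q * gt p k * Rt q h l m'))
      - 2*(gt i k * (gtinv p q * gt p j * Rt q h l m'))
      + 2*(gt h k * (gtinv p q * gt p j * Rt q i l m'))
      - 2*(gt h j * (gtinv p q * gt p k * Rt q i l m'))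
      + 2*(gt h k * (gtinv p q * gt p i * Rt q j l m'))
      - 2*(gt i k * (gtinv p q * gt p h * Rt q j l m'))
      + 2*(gt i j * (gtinv p q * gt p h * Rt q k l m'))
      - 2*(gt h j * (gtinv p q * gt p i * Rt q k l m')) from by
      simp only [KN2]; rw [hgsym i p, hgsym h p]; ring]
    simp only [Finset.sum_add_distrib, Finset.sum_sub_distrib, ← Finset.mul_sum, key2]
    rw [ha k h, ha j h, ha j i, ha k i]
    ring
  have e2 : dotT gtinv (KN2 gt St) Rt h i j k l m' =
      Tach4 St Rt h i j k l m'
      + gt h l * L m' i j k - gt i l * L m' h j k + gt j l * L m' k h i - gt k l * L m' j h i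
      - gt h m' * L l i j k + gt i m' * L l h j k - gt j m' * L l k h i + gt k m' * L l j h i := by
    simp only [dotT]
    rw [Finset.sum_congr rfl fun p _ => Finset.sum_congr rfl fun q _ => show _ =
        St h l * (gtinv p q * gt q m' * Rt p i j k) + gt h l * (gtinv p q * St q m' * Rt p i j k)
      - St h m' * (gtinv p q * gt q l * Rt p i j k) - gt h m' * (gtinv p q * St q l * Rt p i j k)
      - St i l * (gtinv p q * gt q m' * Rt p h j k) - gt i l * (gtinv p q * St q m' * Rt p h j k)
      + St i m' * (gtinv p q * gt q l * Rt p h j k) + gt i m' * (gtinv p q * St q l * Rt p h j k)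
      + St j l * (gtinv p q * gt q m' * Rt p k h i) + gt j l * (gtinv p q * St q m' * Rt p k h i)
      - St j m' * (gtinv p q * gt q l * Rt p k h i) - gt j m' * (gtinv p q * St q l * Rt p k h i)
      - St k l * (gtinv p q * gt q m' * Rt p j h i) - gt k l * (gtinv p q * St q m' * Rt p j h i)
      + St k m' * (gtinv p q * gt q l * Rt p j h i) + gt k m' * (gtinv p q * St q l * Rt p j h i)
      from by
      simp only [KN2]; rw [ha h p, hp h i p k, hp h i j p, ha j p]; ring]
    simp only [Finset.sum_add_distrib, Finset.sum_sub_distrib, ← Finset.mul_sum, key1, keyS1]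
    simp only [Tach4]
    rw [ha m' h, ha l h, hp m' k, hp l k, hp m' j, hp l j, hsw2 h i m' j, hsw2 h i l j]
    ring
  have e1 : dotT gtinv Rt (KN2 gt St) h i j k l m' =
      gt i j * (L k h l m' + L h k l m') + gt h k * (L j i l m' + L i j l m')
      - gt i k * (L j h l m' + L h j l m') - gt h j * (L k i l m' + L i k l m') := by
    simp only [dotT]
    rw [Finset.sum_congr rfl fun p _ => Finset.sum_congr rfl fun q _ => show _ =
        St i j * (gtinv p q * gt p k * Rt q h l m') + gt i j * (gtinv p q * St p k * Rt q h l m')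
      - St i k * (gtinv p q * gt p j * Rt q h l m') - gt i k * (gtinv p q * St p j * Rt q h l m')
      + gt h k * (gtinv p q * St p j * Rt q i l m') + St h k * (gtinv p q * gt p j * Rt q i l m')
      - gt h j * (gtinv p q * St p k * Rt q i l m') - St h j * (gtinv p q * gt p k * Rt q i l m')
      + gt h k * (gtinv p q * St p i * Rt q j l m') + St h k * (gtinv p q * gt p i * Rt q j l m')
      - St i k * (gtinv p q * gt p h * Rt q j l m') - gt i k * (gtinv p q * St p h * Rt q j l m')
      + St i j * (gtinv p q * gt p h * Rt q k l m') + gt i j * (gtinv p q * St p h * Rt q k l m')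
      - gt h j * (gtinv p q * St p i * Rt q k l m') - St h j * (gtinv p q * gt p i * Rt q k l m')
      from by
      simp only [KN2]; rw [hgsym i p, hgsym h p, hSsym i p, hSsym h p]; ring]
    simp only [Finset.sum_add_distrib, Finset.sum_sub_distrib, ← Finset.mul_sum, key2, keyS2]
    rw [ha k h, ha j h, ha j i, ha k i]
    ring
  -- linearity of the derivation action in the Weyl tensor
  have e0a : dotT gtinv Rt Ct h i j k l m' =
      dotT gtinv Rt Rt h i j k l m'
      - 1/((m:ℝ)-2) * dotT gtinv Rt (KN2 gt St) h i j k l m'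
      + κt/(2*((m:ℝ)-1)*((m:ℝ)-2)) * dotT gtinv Rt (KN2 gt gt) h i j k l m' := by
    simp only [dotT, hCt, Weyl, Finset.mul_sum, ← Finset.sum_add_distrib, ← Finset.sum_sub_distrib]
    exact Finset.sum_congr rfl fun p _ => Finset.sum_congr rfl fun q _ => by ring
  have e0b : dotT gtinv Ct Rt h i j k l m' =
      dotT gtinv Rt Rt h i j k l m'
      - 1/((m:ℝ)-2) * dotT gtinv (KN2 gt St) Rt h i j k l m'
      + κt/(2*((m:ℝ)-1)*((m:ℝ)-2)) * dotT gtinv (KN2 gt gt) Rt h i j k l m' := by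
    simp only [dotT, hCt, Weyl, Finset.mul_sum, ← Finset.sum_add_distrib, ← Finset.sum_sub_distrib]
    exact Finset.sum_congr rfl fun p _ => Finset.sum_congr rfl fun q _ => by ring
  -- final assembly
  have hm4 : (4:ℝ) ≤ (m:ℝ) := by exact_mod_cast hm
  have h0 : (m:ℝ) ≠ 0 := ne_of_gt (by linarith)
  have h1 : (m:ℝ) - 1 ≠ 0 := by intro hc; rw [sub_eq_zero] at hc; nlinarith
  have h2 : (m:ℝ) - 2 ≠ 0 := by intro hc; rw [sub_eq_zero] at hc; nlinarith
  have hX : Tach4 St Rt h i j k l m'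
      + gt h l * L m' i j k - gt i l * L m' h j k + gt j l * L m' k h i - gt k l * L m' j h i
      - gt h m' * L l i j k + gt i m' * L l h j k - gt j m' * L l k h i + gt k m' * L l j h i
      = (gt i j * (L k h l m' + L h k l m') + gt h k * (L j i l m' + L i j l m')
        - gt i k * (L j h l m' + L h j l m') - gt h j * (L k i l m' + L i k l m'))
        + (Tach4 St Rt h i j k l m' + κt/(m:ℝ) * Tach4 gt Rt h i j k l m') := by
    simp only [hLdef, Lc, Tach4]
    rw [ha k h, ha j h, ha j i, ha k i, ha m' h, ha l h, hp m' k, hp l k, hp m' j, hp l j,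
      hsw2 h i m' j, hsw2 h i l j]
    rw [hSsym m' k, hSsym m' j, hSsym m' i, hSsym m' h, hSsym l k, hSsym l j, hSsym l i, hSsym l h,
      hgsym m' k, hgsym m' j, hgsym m' i, hgsym m' h, hgsym l k, hgsym l j, hgsym l i, hgsym l h,
      hgsym k h, hgsym k i, hgsym j h, hgsym j i]
    field_simp
    ring
  rw [e0a, e0b, e1, e2, e3, e4, hX]
  field_simp
  ring
end
end

section
/- Let (M,g) be an n-dimensional pseudo-Riemannian manifold (n ≥ 4) satisfying R(𝒮X,Y,Z,W) = (κ/(n-1)) R(X,Y,Z,W) for all vector fields (condition (H1)), where 𝒮 is the Ricci operator. Then (M,g) is Ricci-semisymmetric: R·S = 0. -/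
open Finset

noncomputable section

variable {ι : Type*}

/-- Condition (H1): `R(𝒮X,Y,Z,W) = (κ/(n-1)) R(X,Y,Z,W)` implies Ricci-semisymmetry
`R·S = 0` (pointwise algebraic form). -/
theorem stmt14 {n : ℕ} (hn : 4 ≤ n) (g ginv : Fin n → Fin n → ℝ)
    (hgsym : ∀ i j, g i j = g j i) (hginv : IsInv g ginv)
    (R : Fin n → Fin n → Fin n → Fin n → ℝ) (hR : IsCurv R)
    (S : Fin n → Fin n → ℝ) (hS : S = Ricci ginv R)
    (κ : ℝ) (hκ : κ = scal ginv S)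
    (hH1 : ∀ h i j k, (∑ p, ∑ q, ginv p q * S q h * R p i j k) =
      κ / ((n : ℝ) - 1) * R h i j k) :
    ∀ i j l m, dotS ginv R S i j l m = 0 := by
  obtain ⟨hR1, hR2, hR3⟩ := hR
  obtain ⟨hI1, hI2⟩ := hginv
  -- ginv is symmetric
  have hd : ∀ k j, (∑ l, g k l * ginv j l) = if k = j then (1:ℝ) else 0 := by
    intro k j
    have : (∑ l, g k l * ginv j l) = ∑ l, ginv j l * g l k :=
      Finset.sum_congr rfl fun l _ => by rw [hgsym k l]; ring
    rw [this, hI2]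
    simp [eq_comm]
  have hkey : ∀ i j, ginv i j = ∑ k, ∑ l, ginv i k * g k l * ginv j l := by
    intro i j
    have h0 : ginv i j = ∑ k, ginv i k * (if k = j then (1:ℝ) else 0) := by
      simp [Finset.sum_ite_eq', mul_comm]
    rw [h0]
    refine Finset.sum_congr rfl fun k _ => ?_
    rw [← hd k j, Finset.mul_sum]
    simp [mul_assoc]
  have hginvsym : ∀ i j, ginv i j = ginv j i := by
    intro i j
    rw [hkey i j, hkey j i, Finset.sum_comm]
    refine Finset.sum_congr rfl fun a _ => Finset.sum_congr rfl fun b _ => ?_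
    rw [hgsym]; ring
  -- antisymmetry in the last pair
  have hR4 : ∀ a b c d, R a b c d = - R a b d c := by
    intro a b c d
    rw [hR2 a b c d, hR1, hR2 a b d c]
  -- S is symmetric
  have hSsym : ∀ i j, S i j = S j i := by
    intro i j
    rw [hS]
    unfold Ricci
    rw [Finset.sum_comm]
    refine Finset.sum_congr rfl fun q _ => Finset.sum_congr rfl fun p _ => ?_
    rw [hginvsym q p]
    congr 1
    rw [hR4 p i j q, hR2 q j i p, hR1 i p q j]
  -- reassociated form of (H1) with first slot of ginv contracted
  have hA : ∀ h i' j' k, (∑ p, ∑ q, ginv p q * (S p h * R q i' j' k)) =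
      κ / ((n : ℝ) - 1) * R h i' j' k := by
    intro h i' j' k
    rw [← hH1 h i' j' k, Finset.sum_comm]
    refine Finset.sum_congr rfl fun a _ => Finset.sum_congr rfl fun b _ => ?_
    rw [hginvsym b a]; ring
  intro i j l m
  unfold dotS
  simp only [mul_add, Finset.sum_add_distrib]
  have h1 : (∑ p, ∑ q, ginv p q * (S p j * R q i l m)) = κ / ((n : ℝ) - 1) * R j i l m :=
    hA j i l m
  have h2 : (∑ p, ∑ q, ginv p q * (S i p * R q j l m)) = κ / ((n : ℝ) - 1) * R i j l m := by
    rw [← hA i j l m]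
    refine Finset.sum_congr rfl fun a _ => Finset.sum_congr rfl fun b _ => ?_
    rw [hSsym i a]
  rw [h1, h2, hR1 j i l m]
  ring
end
end

section
/- Let (M,g) be a pseudo-Riemannian manifold of dimension n ≥ 3 whose Ricci tensor S is nonzero at a point x and whose Tachibana tensor satisfies Q(S,R) = 0 at x. Then R·R = 0 at x (the manifold is semisymmetric at x). -/
open Finset

noncomputable section

variable {ι : Type*}

private lemma sum_asym {n : ℕ} (f : Fin n → ℝ) (Y : Fin n → Fin n → ℝ)
    (hY : ∀ p q, Y p q = - Y q p) : (∑ p, ∑ q, f p * f q * Y p q) = 0 := by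
  have h : (∑ p, ∑ q, f p * f q * Y p q) = - ∑ p, ∑ q, f p * f q * Y p q := by
    calc (∑ p, ∑ q, f p * f q * Y p q) = ∑ p, ∑ q, -(f q * f p * Y q p) :=
          Finset.sum_congr rfl fun p _ => Finset.sum_congr rfl fun q _ => by
            rw [hY p q]; ring
      _ = -∑ p, ∑ q, (f q * f p * Y q p) := by simp [← Finset.sum_neg_distrib]
      _ = -∑ q, ∑ p, (f q * f p * Y q p) := by rw [Finset.sum_comm]
  linarith

private lemma ginv_symm {n : ℕ} (g ginv : Fin n → Fin n → ℝ)
    (hgsym : ∀ i j, g i j = g j i) (hginv : IsInv g ginv) :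
    ∀ i j, ginv i j = ginv j i := by
  intro i j
  have hJ : ∀ k j, (if k = j then (1:ℝ) else 0) = ∑ l, g k l * ginv j l := by
    intro k j
    have h2 := hginv.2 j k
    have : (if k = j then (1:ℝ) else 0) = (if j = k then (1:ℝ) else 0) := by simp [eq_comm]
    rw [this, ← h2]
    exact Finset.sum_congr rfl fun l _ => by rw [hgsym l k]; ring
  calc ginv i j = ∑ k, ginv i k * (if k = j then (1:ℝ) else 0) := by simp
    _ = ∑ k, ginv i k * ∑ l, g k l * ginv j l :=
        Finset.sum_congr rfl fun k _ => by rw [← hJ k j]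
    _ = ∑ k, ∑ l, ginv i k * (g k l * ginv j l) := by simp [Finset.mul_sum]
    _ = ∑ l, ∑ k, ginv i k * (g k l * ginv j l) := Finset.sum_comm
    _ = ∑ l, (∑ k, ginv i k * g k l) * ginv j l := by
        refine Finset.sum_congr rfl fun l _ => ?_
        rw [Finset.sum_mul]
        exact Finset.sum_congr rfl fun k _ => by ring
    _ = ∑ l, (if i = l then (1:ℝ) else 0) * ginv j l :=
        Finset.sum_congr rfl fun l _ => by rw [hginv.2 i l]
    _ = ginv j i := by simp

/-- If the Ricci tensor is nonzero and `Q(S,R) = 0`, then `R·R = 0`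
([DD], Theorem 4.1; pointwise algebraic form). -/
theorem stmt15 {n : ℕ} (hn : 3 ≤ n) (g ginv : Fin n → Fin n → ℝ)
    (hgsym : ∀ i j, g i j = g j i) (hginv : IsInv g ginv)
    (R : Fin n → Fin n → Fin n → Fin n → ℝ) (hR : IsCurv R)
    (S : Fin n → Fin n → ℝ) (hS : S = Ricci ginv R)
    (hSne : ¬ ∀ i j, S i j = 0)
    (hQ : ∀ h i j k l m, Tach4 S R h i j k l m = 0) :
    ∀ h i j k l m, dotT ginv R R h i j k l m = 0 := by
  obtain ⟨hr1, hr2, hbi⟩ := hR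
  have r3 : ∀ a b c d, R a b c d = - R a b d c := by
    intro a b c d
    have h1 := hr2 a b c d
    have h2 := hr1 c d a b
    have h3 := hr2 d c a b
    linarith
  have hgi : ∀ i j, ginv i j = ginv j i := ginv_symm g ginv hgsym hginv
  have hSdef : ∀ i j, S i j = ∑ p, ∑ q, ginv p q * R p i j q := by
    intro i j; rw [hS]; rfl
  have hSsym : ∀ i j, S i j = S j i := by
    intro i j
    rw [hSdef i j, hSdef j i]
    calc (∑ p, ∑ q, ginv p q * R p i j q) = ∑ p, ∑ q, ginv q p * R q j i p := by
          refine Finset.sum_congr rfl fun p _ => Finset.sum_congr rfl fun q _ => ?_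
          have e1 := hr2 q j i p
          have e2 := hr1 i p q j
          have e3 := r3 p i q j
          have e4 := hgi p q
          linear_combination R p i j q * e4 - ginv q p * (e1 + e2 - e3)
      _ = ∑ q, ∑ p, ginv q p * R q j i p := Finset.sum_comm
  -- existence of w with S(w,w) ≠ 0
  obtain ⟨w, hε0⟩ : ∃ w : Fin n → ℝ, (∑ p, ∑ q, w p * w q * S p q) ≠ 0 := by
    by_contra hcon
    push_neg at hcon
    apply hSne
    have diag : ∀ i : Fin n, S i i = 0 := by
      intro i
      have := hcon (fun t => if t = i then 1 else 0)
      simpa using this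
    intro i j
    have := hcon (fun t => (if t = i then 1 else 0) + (if t = j then 1 else 0))
    simp [add_mul, mul_add, Finset.sum_add_distrib, diag] at this
    have hs := hSsym i j
    linarith
  obtain ⟨ε, hεdef⟩ : ∃ e : ℝ, e = ∑ p, ∑ q, w p * w q * S p q := ⟨_, rfl⟩
  rw [← hεdef] at hε0
  obtain ⟨a, ha⟩ : ∃ a : Fin n → ℝ, ∀ x, a x = ∑ p, w p * S p x := ⟨_, fun _ => rfl⟩
  obtain ⟨D, hD⟩ : ∃ D : Fin n → Fin n → Fin n → ℝ,
      ∀ x y z, D x y z = ∑ p, w p * R p x y z := ⟨_, fun _ _ _ => rfl⟩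
  obtain ⟨E, hE⟩ : ∃ E : Fin n → Fin n → ℝ,
      ∀ x z, E x z = ∑ p, ∑ q, w p * w q * R p x q z := ⟨_, fun _ _ => rfl⟩
  -- E is symmetric
  have hEsym : ∀ x z, E x z = E z x := by
    intro x z
    rw [hE x z, hE z x]
    calc (∑ p, ∑ q, w p * w q * R p x q z) = ∑ p, ∑ q, w q * w p * R q z p x := by
          refine Finset.sum_congr rfl fun p _ => Finset.sum_congr rfl fun q _ => ?_
          have := hr2 p x q z
          linear_combination (w p * w q) * this
      _ = ∑ q, ∑ p, w q * w p * R q z p x := Finset.sum_comm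
  -- S contracted with w on the right
  have haS : ∀ x, (∑ r, w r * S x r) = a x := by
    intro x
    rw [ha x]
    exact Finset.sum_congr rfl fun r _ => by rw [hSsym x r]
  -- w-contraction of a
  have hacon : (∑ j, w j * a j) = ε := by
    rw [hεdef]
    calc (∑ j, w j * a j) = ∑ j, ∑ p, w p * w j * S p j := by
          refine Finset.sum_congr rfl fun j _ => ?_
          rw [ha j, Finset.mul_sum]
          exact Finset.sum_congr rfl fun p _ => by ring
      _ = ∑ p, ∑ j, w p * w j * S p j := Finset.sum_comm
  -- zero contractions by antisymmetry
  have z1 : ∀ y z, (∑ p, ∑ r, w p * w r * R p r y z) = 0 := by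
    intro y z
    exact sum_asym w (fun p r => R p r y z) (fun p r => hr1 p r y z)
  have z2 : ∀ x y, (∑ p, ∑ r, w p * w r * R p x y r) = - E x y := by
    intro x y
    rw [hE x y]
    have : (∑ p, ∑ r, w p * w r * R p x y r) = ∑ p, ∑ r, -(w p * w r * R p x r y) := by
      refine Finset.sum_congr rfl fun p _ => Finset.sum_congr rfl fun r _ => ?_
      rw [r3 p x y r]; ring
    rw [this]
    simp [← Finset.sum_neg_distrib]
  -- the key identity (1')
  have key1 : ∀ l x y z, ε * R l x y z = a l * D x y z - a x * D l y z - a y * D x l z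
      - a z * D x y l + S y l * E x z - S z l * E x y := by
    intro l x y z
    have h0 : ∑ p, ∑ r, w p * w r * Tach4 S R p x y z l r = 0 := by
      simp [hQ]
    have e1 : ∑ p, ∑ r, w p * w r * Tach4 S R p x y z l r =
        (∑ p, ∑ r, (w p * S p l) * (w r * R r x y z))
      + (∑ p, ∑ r, S x l * (w p * w r * R p r y z))
      + (∑ p, ∑ r, S y l * (w p * w r * R p x r z))
      + (∑ p, ∑ r, S z l * (w p * w r * R p x y r))
      - (∑ p, ∑ r, (w p * w r * S p r) * R l x y z)
      - (∑ p, ∑ r, (w p * R p l y z) * (w r * S x r))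
      - (∑ p, ∑ r, (w p * R p x l z) * (w r * S y r))
      - (∑ p, ∑ r, (w p * R p x y l) * (w r * S z r)) := by
      simp only [← Finset.sum_add_distrib, ← Finset.sum_sub_distrib]
      exact Finset.sum_congr rfl fun p _ => Finset.sum_congr rfl fun r _ => by
        simp only [Tach4]; ring
    have t1 : (∑ p, ∑ r, (w p * S p l) * (w r * R r x y z)) = a l * D x y z := by
      rw [← Finset.sum_mul_sum, ← ha l, ← hD x y z]
    have t2 : (∑ p, ∑ r, S x l * (w p * w r * R p r y z)) = 0 := by
      simp only [← Finset.mul_sum]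
      rw [z1 y z]; ring
    have t3 : (∑ p, ∑ r, S y l * (w p * w r * R p x r z)) = S y l * E x z := by
      simp only [← Finset.mul_sum]
      rw [← hE x z]
    have t4 : (∑ p, ∑ r, S z l * (w p * w r * R p x y r)) = - (S z l * E x y) := by
      simp only [← Finset.mul_sum]
      rw [z2 x y]; ring
    have t5 : (∑ p, ∑ r, (w p * w r * S p r) * R l x y z) = ε * R l x y z := by
      simp only [← Finset.sum_mul]
      rw [← hεdef]
    have t6 : (∑ p, ∑ r, (w p * R p l y z) * (w r * S x r)) = D l y z * a x := by
      rw [← Finset.sum_mul_sum, ← hD l y z, haS x]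
    have t7 : (∑ p, ∑ r, (w p * R p x l z) * (w r * S y r)) = D x l z * a y := by
      rw [← Finset.sum_mul_sum, ← hD x l z, haS y]
    have t8 : (∑ p, ∑ r, (w p * R p x y l) * (w r * S z r)) = D x y l * a z := by
      rw [← Finset.sum_mul_sum, ← hD x y l, haS z]
    rw [e1, t1, t2, t3, t4, t5, t6, t7, t8] at h0
    linarith
  -- Bianchi contraction: ∑_j w_j R m x j z = D x m z - D m x z
  have hG : ∀ m x z, (∑ j, w j * R m x j z) = D x m z - D m x z := by
    intro m x z
    have h0 : ∑ j, w j * (R m x j z + R x j m z + R j m x z) = 0 := by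
      simp [hbi]
    have e1 : ∑ j, w j * (R m x j z + R x j m z + R j m x z)
        = (∑ j, w j * R m x j z) + (∑ j, -(w j * R j x m z)) + (∑ j, w j * R j m x z) := by
      simp only [← Finset.sum_add_distrib]
      refine Finset.sum_congr rfl fun j _ => ?_
      rw [hr1 x j m z]; ring
    rw [e1] at h0
    simp only [Finset.sum_neg_distrib] at h0
    rw [← hD x m z, ← hD m x z] at h0
    linarith
  -- contraction of D in middle slot
  have hDcon : ∀ x m, (∑ j, w j * D x j m) = E x m := by
    intro x m
    rw [hE x m]
    calc (∑ j, w j * D x j m) = ∑ j, ∑ p, w p * w j * R p x j m := by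
          refine Finset.sum_congr rfl fun j _ => ?_
          rw [hD x j m, Finset.mul_sum]
          exact Finset.sum_congr rfl fun p _ => by ring
      _ = ∑ p, ∑ j, w p * w j * R p x j m := Finset.sum_comm
  -- w-contraction of E vanishes
  have hEcon : ∀ x, (∑ j, w j * E x j) = 0 := by
    intro x
    have e1 : (∑ j, w j * E x j) = ∑ p, w p * ∑ q, ∑ j, w q * w j * R p x q j := by
      calc (∑ j, w j * E x j) = ∑ j, ∑ p, ∑ q, w p * (w q * w j * R p x q j) := by
            refine Finset.sum_congr rfl fun j _ => ?_
            rw [hE x j, Finset.mul_sum]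
            refine Finset.sum_congr rfl fun p _ => ?_
            rw [Finset.mul_sum]
            exact Finset.sum_congr rfl fun q _ => by ring
        _ = ∑ p, ∑ j, ∑ q, w p * (w q * w j * R p x q j) := Finset.sum_comm
        _ = ∑ p, ∑ q, ∑ j, w p * (w q * w j * R p x q j) :=
            Finset.sum_congr rfl fun p _ => Finset.sum_comm
        _ = ∑ p, w p * ∑ q, ∑ j, w q * w j * R p x q j := by
            simp only [Finset.mul_sum]
    rw [e1]
    have e2 : ∀ p, (∑ q, ∑ j, w q * w j * R p x q j) = 0 := fun p =>
      sum_asym w (fun q j => R p x q j) (fun q j => r3 p x q j)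
    simp [e2]
  -- identity (3)
  have key3 : ∀ x m z, ε * (2 * D x m z - D m x z)
      = 2 * a m * E x z - a x * E m z - a z * E x m := by
    intro x m z
    have h0 : ∑ j, w j * (ε * R m x j z) = ∑ j, w j * (a m * D x j z - a x * D m j z
        - a j * D x m z - a z * D x j m + S j m * E x z - S z m * E x j) :=
      Finset.sum_congr rfl fun j _ => by rw [key1 m x j z]
    have eL : ∑ j, w j * (ε * R m x j z) = ε * (D x m z - D m x z) := by
      rw [← hG m x z, Finset.mul_sum]
      exact Finset.sum_congr rfl fun j _ => by ring
    have eR : ∑ j, w j * (a m * D x j z - a x * D m j z - a j * D x m z - a z * D x j m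
        + S j m * E x z - S z m * E x j)
        = a m * (∑ j, w j * D x j z) - a x * (∑ j, w j * D m j z)
          - (∑ j, w j * a j) * D x m z - a z * (∑ j, w j * D x j m)
          + (∑ j, w j * S j m) * E x z - S z m * (∑ j, w j * E x j) := by
      simp only [Finset.mul_sum, Finset.sum_mul, ← Finset.sum_add_distrib,
        ← Finset.sum_sub_distrib]
      exact Finset.sum_congr rfl fun j _ => by ring
    rw [eL, eR, hDcon x z, hDcon m z, hDcon x m, hacon, ← ha m, hEcon x] at h0
    linarith
  -- identity (4): ε D = a∧E
  have key4 : ∀ x m z, ε * D x m z = a m * E x z - a z * E x m := by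
    intro x m z
    have A := key3 x m z
    have B := key3 m x z
    have hs := hEsym m x
    linear_combination (2/3 : ℝ) * A + (1/3 : ℝ) * B - (1/3 : ℝ) * a z * hs
  -- identity (5)
  have key5 : ∀ l x y z, ε^2 * R l x y z = a x * a z * E l y - a x * a y * E l z
      + ε * S y l * E x z - ε * S z l * E x y := by
    intro l x y z
    linear_combination ε * key1 l x y z + a l * key4 x y z - a x * key4 l y z
      - a y * key4 x l z - a z * key4 x y l
  -- symmetry constraint: (εS - a⊗a) ⊗ E is symmetric
  have keyF : ∀ x y l z, (ε * S x y - a x * a y) * E l z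
      = (ε * S z l - a z * a l) * E x y := by
    intro x y l z
    linear_combination key5 y z l x - key5 l x y z + ε^2 * hr2 l x y z
      - a x * a z * hEsym l y + ε * S x y * hEsym l z + a l * a z * hEsym x y
      - ε * S y l * hEsym x z - ε * E z x * hSsym y l
  -- Case 1: E vanishes identically, hence R = 0
  by_cases hE0 : ∀ x z, E x z = 0
  · have hR0 : ∀ l x y z, R l x y z = 0 := by
      intro l x y z
      have h := key5 l x y z
      simp only [hE0, mul_zero, zero_mul, sub_zero, add_zero, zero_sub, neg_zero] at h
      rcases mul_eq_zero.mp h.symm.symm with h' | h'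
      · exact absurd h' (pow_ne_zero 2 hε0)
      · exact h'
    intro h i j k l m
    simp [dotT, hR0]
  -- Case 2: E ≠ 0 somewhere
  · push_neg at hE0
    obtain ⟨x0, z0, hx0⟩ := hE0
    obtain ⟨lam, hlam⟩ : ∃ L : ℝ, L = (ε * S z0 x0 - a z0 * a x0) / E x0 z0 := ⟨_, rfl⟩
    have hF : ∀ x y, ε * S x y - a x * a y = lam * E x y := by
      intro x y
      have h := keyF x y x0 z0
      rw [hlam]
      field_simp
      linear_combination h
    have hSb : ∀ x y, ε * S x y = a x * a y + lam * E x y := fun x y => by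
      linear_combination hF x y
    -- contracted quantities
    obtain ⟨σ, hσ⟩ : ∃ s : ℝ, s = ∑ p, ∑ q, ginv p q * E p q := ⟨_, rfl⟩
    obtain ⟨β, hβ⟩ : ∃ b : ℝ, b = ∑ p, ∑ q, ginv p q * a p * a q := ⟨_, rfl⟩
    obtain ⟨c, hc⟩ : ∃ c : Fin n → ℝ, ∀ x, c x = ∑ p, ∑ q, ginv p q * a p * E q x :=
      ⟨_, fun _ => rfl⟩
    obtain ⟨E2, hE2⟩ : ∃ F : Fin n → Fin n → ℝ,
        ∀ x y, F x y = ∑ p, ∑ q, ginv p q * E p x * E q y := ⟨_, fun _ _ => rfl⟩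
    have m1 : ∀ x, (∑ p, ∑ q, ginv p q * E p x * a q) = c x := by
      intro x
      calc (∑ p, ∑ q, ginv p q * E p x * a q)
          = ∑ q, ∑ p, ginv p q * E p x * a q := Finset.sum_comm
        _ = ∑ q, ∑ p, ginv q p * a q * E p x := by
            refine Finset.sum_congr rfl fun q _ => Finset.sum_congr rfl fun p _ => ?_
            rw [hgi q p]; ring
        _ = c x := (hc x).symm
    have hE2sym : ∀ x y, E2 x y = E2 y x := by
      intro x y
      rw [hE2 x y, hE2 y x]
      calc (∑ p, ∑ q, ginv p q * E p x * E q y)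
          = ∑ q, ∑ p, ginv p q * E p x * E q y := Finset.sum_comm
        _ = ∑ q, ∑ p, ginv q p * E q y * E p x := by
            refine Finset.sum_congr rfl fun q _ => Finset.sum_congr rfl fun p _ => ?_
            rw [hgi q p]; ring
    have hscal : (∑ p, ∑ q, ginv p q * (ε * S q p)) = β + lam * σ := by
      have e1 : (∑ p, ∑ q, ginv p q * (ε * S q p))
          = (∑ p, ∑ q, ginv p q * a p * a q) + (∑ p, ∑ q, lam * (ginv p q * E p q)) := by
        simp only [← Finset.sum_add_distrib]
        refine Finset.sum_congr rfl fun p _ => Finset.sum_congr rfl fun q _ => ?_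
        linear_combination (ginv p q) * hSb q p + lam * ginv p q * hEsym q p
      rw [e1, ← hβ]
      simp only [← Finset.mul_sum]
      rw [← hσ]
    -- the Ricci condition (RC)
    have keyRC : ∀ x y, lam * E2 x y = (ε + σ) * (a x * a y)
        + (ε * lam + lam * σ + β) * E x y - a x * c y - a y * c x := by
      intro x y
      have h0 : ε^2 * S x y = ∑ p, ∑ q, ginv p q * (ε^2 * R p x y q) := by
        rw [hSdef x y, Finset.mul_sum]
        refine Finset.sum_congr rfl fun p _ => ?_
        rw [Finset.mul_sum]
        exact Finset.sum_congr rfl fun q _ => by ring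
      have e1 : (∑ p, ∑ q, ginv p q * (ε^2 * R p x y q))
          = (∑ p, ∑ q, a x * (ginv p q * E p y * a q))
          - (∑ p, ∑ q, (a x * a y) * (ginv p q * E p q))
          + (∑ p, ∑ q, a y * (ginv p q * a p * E q x))
          + (∑ p, ∑ q, lam * (ginv p q * E p y * E q x))
          - (∑ p, ∑ q, E x y * (ginv p q * (ε * S q p))) := by
        simp only [← Finset.sum_add_distrib, ← Finset.sum_sub_distrib]
        refine Finset.sum_congr rfl fun p _ => Finset.sum_congr rfl fun q _ => ?_
        linear_combination (ginv p q) * key5 p x y q + (ginv p q * E x q) * hSb y p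
          + (ginv p q * (a y * a p + lam * E y p)) * hEsym x q
          + (lam * ginv p q * E q x) * hEsym y p
      have s1 : (∑ p, ∑ q, a x * (ginv p q * E p y * a q)) = a x * c y := by
        simp only [← Finset.mul_sum]
        rw [m1 y]
      have s2 : (∑ p, ∑ q, (a x * a y) * (ginv p q * E p q)) = a x * a y * σ := by
        simp only [← Finset.mul_sum]
        rw [← hσ]
      have s3 : (∑ p, ∑ q, a y * (ginv p q * a p * E q x)) = a y * c x := by
        simp only [← Finset.mul_sum]
        rw [← hc x]
      have s4 : (∑ p, ∑ q, lam * (ginv p q * E p y * E q x)) = lam * E2 y x := by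
        simp only [← Finset.mul_sum]
        rw [← hE2 y x]
      have s5 : (∑ p, ∑ q, E x y * (ginv p q * (ε * S q p))) = E x y * (β + lam * σ) := by
        simp only [← Finset.mul_sum]
        rw [hscal]
      rw [e1, s1, s2, s3, s4, s5] at h0
      linear_combination -h0 + ε * hSb x y + lam * hE2sym x y
    -- contraction lemmas with w for the ginv-quantities
    have hE2w : ∀ x, (∑ j, w j * E2 x j) = 0 := by
      intro x
      have e1 : (∑ j, w j * E2 x j)
          = ∑ p, ∑ q, (ginv p q * E p x) * (∑ j, w j * E q j) := by
        calc (∑ j, w j * E2 x j)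
            = ∑ j, ∑ p, ∑ q, (ginv p q * E p x) * (w j * E q j) := by
              refine Finset.sum_congr rfl fun j _ => ?_
              rw [hE2 x j, Finset.mul_sum]
              refine Finset.sum_congr rfl fun p _ => ?_
              rw [Finset.mul_sum]
              exact Finset.sum_congr rfl fun q _ => by ring
          _ = ∑ p, ∑ j, ∑ q, (ginv p q * E p x) * (w j * E q j) := Finset.sum_comm
          _ = ∑ p, ∑ q, ∑ j, (ginv p q * E p x) * (w j * E q j) :=
              Finset.sum_congr rfl fun p _ => Finset.sum_comm
          _ = ∑ p, ∑ q, (ginv p q * E p x) * (∑ j, w j * E q j) := by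
              simp only [Finset.mul_sum]
      rw [e1]
      simp [hEcon]
    have hcw : (∑ j, w j * c j) = 0 := by
      have e1 : (∑ j, w j * c j)
          = ∑ p, ∑ q, (ginv p q * a p) * (∑ j, w j * E q j) := by
        calc (∑ j, w j * c j)
            = ∑ j, ∑ p, ∑ q, (ginv p q * a p) * (w j * E q j) := by
              refine Finset.sum_congr rfl fun j _ => ?_
              rw [hc j, Finset.mul_sum]
              refine Finset.sum_congr rfl fun p _ => ?_
              rw [Finset.mul_sum]
              exact Finset.sum_congr rfl fun q _ => by ring
          _ = ∑ p, ∑ j, ∑ q, (ginv p q * a p) * (w j * E q j) := Finset.sum_comm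
          _ = ∑ p, ∑ q, ∑ j, (ginv p q * a p) * (w j * E q j) :=
              Finset.sum_congr rfl fun p _ => Finset.sum_comm
          _ = ∑ p, ∑ q, (ginv p q * a p) * (∑ j, w j * E q j) := by
              simp only [Finset.mul_sum]
      rw [e1]
      simp [hEcon]
    -- (C1): c = (ε+σ) a
    have keyC1 : ∀ x, c x = (ε + σ) * a x := by
      intro x
      have h0 : ∑ j, w j * (lam * E2 x j) = ∑ j, w j * ((ε + σ) * (a x * a j)
          + (ε * lam + lam * σ + β) * E x j - a x * c j - a j * c x) :=
        Finset.sum_congr rfl fun j _ => by rw [keyRC x j]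
      have eL : ∑ j, w j * (lam * E2 x j) = 0 := by
        have : ∑ j, w j * (lam * E2 x j) = lam * ∑ j, w j * E2 x j := by
          rw [Finset.mul_sum]
          exact Finset.sum_congr rfl fun j _ => by ring
        rw [this, hE2w x, mul_zero]
      have eR : ∑ j, w j * ((ε + σ) * (a x * a j) + (ε * lam + lam * σ + β) * E x j
          - a x * c j - a j * c x)
          = (ε + σ) * a x * (∑ j, w j * a j) + (ε * lam + lam * σ + β) * (∑ j, w j * E x j)
            - a x * (∑ j, w j * c j) - (∑ j, w j * a j) * c x := by
        simp only [Finset.mul_sum, Finset.sum_mul, ← Finset.sum_add_distrib,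
          ← Finset.sum_sub_distrib]
        exact Finset.sum_congr rfl fun j _ => by ring
      rw [eL, eR, hacon, hEcon x, hcw] at h0
      have h1 : ε * ((ε + σ) * a x - c x) = 0 := by linear_combination -h0
      rcases mul_eq_zero.mp h1 with h' | h'
      · exact absurd h' hε0
      · linarith
    -- (RC')
    have keyRC' : ∀ x y, lam * E2 x y = (ε * lam + lam * σ + β) * E x y
        - (ε + σ) * (a x * a y) := by
      intro x y
      linear_combination keyRC x y - a x * keyC1 y - a y * keyC1 x
    -- P, Φ, Ψ
    obtain ⟨Φf, hΦ⟩ : ∃ f : Fin n → Fin n → Fin n → ℝ,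
        ∀ x y z, f x y z = a y * E x z - a z * E x y := ⟨_, fun _ _ _ => rfl⟩
    obtain ⟨P, hP⟩ : ∃ f : Fin n → Fin n → ℝ,
        ∀ x y, f x y = a x * a y + lam * E x y := ⟨_, fun _ _ => rfl⟩
    obtain ⟨Ψ, hΨdef⟩ : ∃ f : Fin n → Fin n → Fin n → Fin n → ℝ,
        ∀ p x y z, f p x y z = E p y * P x z - E p z * P x y + a p * Φf x y z :=
      ⟨_, fun _ _ _ _ => rfl⟩
    have hΨ : ∀ l x y z, ε^2 * R l x y z = Ψ l x y z := by
      intro l x y z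
      rw [hΨdef, hΦ, hP, hP]
      linear_combination key5 l x y z + E x z * hSb y l - E x y * hSb z l
        - lam * E x z * hEsym l y + lam * E x y * hEsym l z
    -- contraction of two Ψ's
    have hC : ∀ x y z u l m, (∑ p, ∑ q, ginv p q * Ψ p x y z * Ψ q u l m)
        = E2 y l * (P x z * P u m) - E2 y m * (P x z * P u l)
        - E2 z l * (P x y * P u m) + E2 z m * (P x y * P u l)
        + c y * (P x z * Φf u l m) - c z * (P x y * Φf u l m)
        + c l * (Φf x y z * P u m) - c m * (Φf x y z * P u l)
        + β * (Φf x y z * Φf u l m) := by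
      intro x y z u l m
      have e1 : (∑ p, ∑ q, ginv p q * Ψ p x y z * Ψ q u l m)
          = (∑ p, ∑ q, (ginv p q * E p y * E q l) * (P x z * P u m))
          - (∑ p, ∑ q, (ginv p q * E p y * E q m) * (P x z * P u l))
          - (∑ p, ∑ q, (ginv p q * E p z * E q l) * (P x y * P u m))
          + (∑ p, ∑ q, (ginv p q * E p z * E q m) * (P x y * P u l))
          + (∑ p, ∑ q, (ginv p q * E p y * a q) * (P x z * Φf u l m))
          - (∑ p, ∑ q, (ginv p q * E p z * a q) * (P x y * Φf u l m))
          + (∑ p, ∑ q, (ginv p q * a p * E q l) * (Φf x y z * P u m))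
          - (∑ p, ∑ q, (ginv p q * a p * E q m) * (Φf x y z * P u l))
          + (∑ p, ∑ q, (ginv p q * a p * a q) * (Φf x y z * Φf u l m)) := by
        simp only [← Finset.sum_add_distrib, ← Finset.sum_sub_distrib]
        refine Finset.sum_congr rfl fun p _ => Finset.sum_congr rfl fun q _ => ?_
        rw [hΨdef p x y z, hΨdef q u l m]
        ring
      rw [e1]
      simp only [← Finset.sum_mul]
      rw [← hE2 y l, ← hE2 y m, ← hE2 z l, ← hE2 z m, m1 y, m1 z, ← hc l, ← hc m, ← hβ]
    -- assemble ε⁴ (R·R)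
    have hdot : ∀ u i j k l m, ε^4 * dotT ginv R R u i j k l m
        = (∑ p, ∑ q, ginv p q * Ψ p i j k * Ψ q u l m)
        - (∑ p, ∑ q, ginv p q * Ψ p u j k * Ψ q i l m)
        + (∑ p, ∑ q, ginv p q * Ψ p k u i * Ψ q j l m)
        - (∑ p, ∑ q, ginv p q * Ψ p j u i * Ψ q k l m) := by
      intro u i j k l m
      simp only [dotT]
      simp only [Finset.mul_sum]
      simp only [← Finset.sum_add_distrib, ← Finset.sum_sub_distrib]
      refine Finset.sum_congr rfl fun p _ => Finset.sum_congr rfl fun q _ => ?_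
      rw [hr1 u p j k, hr2 u i p k, hr2 u i j p, hr1 j p u i]
      linear_combination
          (ginv p q * (ε^2 * R q u l m)) * hΨ p i j k + (ginv p q * Ψ p i j k) * hΨ q u l m
        - (ginv p q * (ε^2 * R q i l m)) * hΨ p u j k - (ginv p q * Ψ p u j k) * hΨ q i l m
        + (ginv p q * (ε^2 * R q j l m)) * hΨ p k u i + (ginv p q * Ψ p k u i) * hΨ q j l m
        - (ginv p q * (ε^2 * R q k l m)) * hΨ p j u i - (ginv p q * Ψ p j u i) * hΨ q k l m
    -- final case analysis on lam
    by_cases hlam0 : lam = 0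
    · by_cases hβ0 : β = 0
      · -- lam = 0, β = 0 : then ε + σ = 0 and c = 0
        obtain ⟨x1, hx1⟩ : ∃ x1, a x1 ≠ 0 := by
          by_contra hcon
          push_neg at hcon
          apply hε0
          rw [← hacon]
          simp [hcon]
        have hρ : ε + σ = 0 := by
          have h := keyRC' x1 x1
          rw [hlam0, hβ0] at h
          simp only [zero_mul, mul_zero, zero_add, add_zero, mul_comm] at h
          have h2 : (ε + σ) * (a x1 * a x1) = 0 := by linarith
          rcases mul_eq_zero.mp h2 with h' | h'
          · exact h'
          · exact absurd h' (mul_ne_zero hx1 hx1)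
        have hc0 : ∀ x, c x = 0 := fun x => by rw [keyC1 x, hρ]; ring
        intro hh ii jj kk ll mm
        have hd := hdot hh ii jj kk ll mm
        rw [hC ii jj kk hh ll mm, hC hh jj kk ii ll mm, hC kk hh ii jj ll mm,
          hC jj hh ii kk ll mm] at hd
        have h9 : ε^4 * dotT ginv R R hh ii jj kk ll mm = 0 := by
          rw [hd]
          simp only [hP, hΦ, hc0, hβ0, hlam0]
          ring
        exact (mul_eq_zero.mp h9).resolve_left (pow_ne_zero 4 hε0)
      · -- lam = 0, β ≠ 0 : R = 0
        have hEb : ∀ x y, β * E x y = (ε + σ) * (a x * a y) := by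
          intro x y
          have h := keyRC' x y
          rw [hlam0] at h
          linear_combination -h
        have hR0 : ∀ l x y z, R l x y z = 0 := by
          intro l x y z
          have h5 := key5 l x y z
          have h6 : β * (ε^2 * R l x y z) = 0 := by
            have e1 := hSb y l
            have e2 := hSb z l
            rw [hlam0] at e1 e2
            linear_combination β * key5 l x y z + a x * a z * hEb l y
              - a x * a y * hEb l z + β * E x z * e1 - β * E x y * e2
              + a y * a l * hEb x z - a z * a l * hEb x y
          rcases mul_eq_zero.mp h6 with h' | h'
          · exact absurd h' hβ0
          · rcases mul_eq_zero.mp h' with h'' | h''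
            · exact absurd h'' (pow_ne_zero 2 hε0)
            · exact h''
        intro hh ii jj kk ll mm
        simp [dotT, hR0]
    · -- lam ≠ 0 : main case
      have hE2v : ∀ x y, E2 x y = ((ε * lam + lam * σ + β) * E x y
          - (ε + σ) * (a x * a y)) / lam := by
        intro x y
        field_simp
        linear_combination keyRC' x y
      intro hh ii jj kk ll mm
      have hd := hdot hh ii jj kk ll mm
      rw [hC ii jj kk hh ll mm, hC hh jj kk ii ll mm, hC kk hh ii jj ll mm,
        hC jj hh ii kk ll mm] at hd
      have h9 : ε^4 * dotT ginv R R hh ii jj kk ll mm = 0 := by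
        rw [hd]
        simp only [hE2v, keyC1, hP, hΦ]
        rw [hEsym kk ii, hEsym jj ii, hEsym kk hh, hEsym jj hh]
        field_simp
        ring
      exact (mul_eq_zero.mp h9).resolve_left (pow_ne_zero 4 hε0)
end
end

section
/- Let M̄ ×_F Ñ be a warped product with 1-dimensional base (M̄,ḡ), ḡ₁₁ = ε, warping function F(x¹) = (ax¹+b)², and (n-1)-dimensional fibre (Ñ,g̃), n ≥ 4, satisfying condition (SR2) with the same constant a. Then the warped product satisfies R·C - C·R = (1/(n-2)) Q(S,R) on its whole domain. -/
open Finset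

noncomputable section

variable {ι : Type*}

/-- Metric of a warped product `M̄ ×_F Ñ` with 1-dimensional base: the index `none`
is the base direction (`g₁₁ = ε`), and `g_{αβ} = F g̃_{αβ}` on the fibre. -/
def wmet (m : ℕ) (ε F : ℝ) (gt : Fin m → Fin m → ℝ) :
    Option (Fin m) → Option (Fin m) → ℝ :=
  fun i j => match i, j with
  | none, none => ε
  | some a, some b => F * gt a b
  | _, _ => 0

/-- Inverse metric of the warped product. -/
def wmetInv (m : ℕ) (ε F : ℝ) (gtinv : Fin m → Fin m → ℝ) :
    Option (Fin m) → Option (Fin m) → ℝ :=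
  fun i j => match i, j with
  | none, none => ε
  | some a, some b => gtinv a b / F
  | _, _ => 0

/-- Curvature tensor of the warped product, components (W1):
`R_{α11β} = -(T₁₁/2) g̃_{αβ}`, `R_{αβγδ} = F(R̃_{αβγδ} - (Δ₁F/(4F)) G̃_{αβγδ})`,
where `D4F = Δ₁F/(4F)`, other components zero (up to curvature symmetries). -/
def wcurv (m : ℕ) (F T11 D4F : ℝ) (gt : Fin m → Fin m → ℝ)
    (Rt : Fin m → Fin m → Fin m → Fin m → ℝ) :
    Option (Fin m) → Option (Fin m) → Option (Fin m) → Option (Fin m) → ℝ :=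
  fun h i j k => match h, i, j, k with
  | some a, none, none, some d => -(T11 / 2) * gt a d
  | none, some b, some c, none => -(T11 / 2) * gt b c
  | some a, none, some c, none => T11 / 2 * gt a c
  | none, some b, none, some d => T11 / 2 * gt b d
  | some a, some b, some c, some d => F * (Rt a b c d - D4F * Gten gt a b c d)
  | _, _, _, _ => 0

/-- Ricci tensor of the warped product, components (W2); the fibre has dimension
`m = n - 1`:  `S₁₁ = -((n-1)/(2F)) T₁₁`,
`S_{αβ} = S̃_{αβ} - (tr T/2 + (n-2) Δ₁F/(4F)) g̃_{αβ}`. -/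
def wric (m : ℕ) (F T11 trT D4F : ℝ) (gt St : Fin m → Fin m → ℝ) :
    Option (Fin m) → Option (Fin m) → ℝ :=
  fun i j => match i, j with
  | none, none => -((m : ℝ) / (2 * F)) * T11
  | some a, some b => St a b - (trT / 2 + ((m : ℝ) - 1) * D4F) * gt a b
  | _, _ => 0

/-!
For `F = (a x¹ + b)²` the function `√F` is affine, so `T₁₁ = F'' - F'²/(2F) = 0` and
`Δ₁F/(4F) = ε a²`. Hence every curvature component involving the base direction vanishes:
`R` is the fibre tensor `F (R̃ - ε a² G̃)` extended by zero, and `S` is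
`S̃ - (n-2) ε a² g̃` extended by zero. Condition (SR2) says exactly that
`S^p_x R_{pyzw} = e R_{xyzw}` with `e = (κ̃/(n-1) - (n-2) ε a²)/F`, and then `κ = (n-1) e`.

For any `R` with `R_{abcd} = -R_{bacd} = R_{cdab}` and `S^p_x R_{pyzw} = e R_{xyzw}`, the derivation
`R·` kills `g` and `S`, so `R·C = R·R`, while `(g∧S)·R = Q(S,R) + e Q(g,R)` and
`(g∧g)·R = 2 Q(g,R)`. When `κ = (n-1) e` the `Q(g,R)` terms of `C·R` cancel, leaving
`R·C - C·R = Q(S,R)/(n-2)`.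
-/

section Contraction

variable [Fintype ι]

def contr (ginv : ι → ι → ℝ) : (ι → ℝ) →ₗ[ℝ] (ι → ℝ) →ₗ[ℝ] ℝ :=
  LinearMap.mk₂ ℝ (fun X Y => ∑ p, ∑ q, ginv p q * (X p * Y q))
    (fun _ _ _ => by simp only [Pi.add_apply, add_mul, mul_add, Finset.sum_add_distrib])
    (fun _ _ _ => by
      simp only [Pi.smul_apply, smul_eq_mul, Finset.mul_sum, mul_left_comm, mul_assoc])
    (fun _ _ _ => by simp only [Pi.add_apply, mul_add, Finset.sum_add_distrib])
    (fun _ _ _ => by simp only [Pi.smul_apply, smul_eq_mul, Finset.mul_sum, mul_left_comm])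

variable {ginv : ι → ι → ℝ}

lemma contr_apply (X Y : ι → ℝ) : contr ginv X Y = ∑ p, ∑ q, ginv p q * (X p * Y q) := rfl

lemma contr_comm (hginv : ∀ i j, ginv i j = ginv j i) (X Y : ι → ℝ) :
    contr ginv X Y = contr ginv Y X := by
  rw [contr_apply, contr_apply, Finset.sum_comm]
  exact Finset.sum_congr rfl fun p _ => Finset.sum_congr rfl fun q _ => by rw [hginv]; ring

lemma contr_metric [DecidableEq ι] {g : ι → ι → ℝ} (hg : IsInv g ginv) (X : ι → ℝ) (x : ι) :
    contr ginv X (g · x) = X x := by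
  simp only [contr_apply, ← mul_assoc, mul_right_comm _ (X _), ← Finset.sum_mul, hg.2]
  simp

lemma dotT_eq_contr (B T : ι → ι → ι → ι → ℝ) (h i j k l m : ι) :
    dotT ginv B T h i j k l m =
      contr ginv (T · i j k) (B · h l m) + contr ginv (T h · j k) (B · i l m)
        + contr ginv (T h i · k) (B · j l m) + contr ginv (T h i j ·) (B · k l m) := by
  simp only [dotT, contr_apply, mul_add, Finset.sum_add_distrib]

lemma dotS_eq_contr (B : ι → ι → ι → ι → ℝ) (A : ι → ι → ℝ) (i j l m : ι) :
    dotS ginv B A i j l m = contr ginv (A · j) (B · i l m) + contr ginv (A i ·) (B · j l m) := by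
  simp only [dotS, contr_apply, mul_add, Finset.sum_add_distrib]

end Contraction

lemma KN2_fst_eq (E T : ι → ι → ℝ) (b c d : ι) :
    (KN2 E T · b c d) = T b c • (E · d) + E b c • (T · d) - T b d • (E · c) - E b d • (T · c) := by
  funext q
  simp only [KN2, Pi.add_apply, Pi.sub_apply, Pi.smul_apply, smul_eq_mul]
  ring

lemma Gten_fst_eq (g : ι → ι → ℝ) (b c d : ι) :
    (Gten g · b c d) = g b c • (g · d) - g b d • (g · c) := by
  funext q
  simp only [Gten, Pi.sub_apply, Pi.smul_apply, smul_eq_mul]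
  ring

section Eigen

variable [Fintype ι] {ginv A : ι → ι → ℝ} {R : ι → ι → ι → ι → ℝ} {c : ℝ}

/-- `A^p_x R_{pyzw} = c R_{xyzw}`: `R` is an eigentensor of the endomorphism `A` (an index raised
with `ginv`) acting on its first slot. -/
abbrev IsContrEigen (ginv A : ι → ι → ℝ) (R : ι → ι → ι → ι → ℝ) (c : ℝ) : Prop :=
  ∀ x y z w, contr ginv (R · y z w) (A · x) = c * R x y z w

lemma IsContrEigen.contr_snd (hA : IsContrEigen ginv A R c)
    (hanti : ∀ a b c d, R a b c d = -R b a c d) (x y z w : ι) :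
    contr ginv (R y · z w) (A · x) = c * R y x z w := by
  have hR : (R y · z w) = -(R · y z w) := funext fun p => by simp [hanti y p]
  rw [hR, map_neg, LinearMap.neg_apply, hA, hanti y x]
  ring

lemma IsContrEigen.contr_thd (hA : IsContrEigen ginv A R c)
    (hpair : ∀ a b c d, R a b c d = R c d a b) (x y z w : ι) :
    contr ginv (R y z · w) (A · x) = c * R y z x w := by
  have hR : (R y z · w) = (R · w y z) := funext fun p => hpair y z p w
  rw [hR, hA, hpair]

lemma IsContrEigen.contr_fth (hA : IsContrEigen ginv A R c)
    (hanti : ∀ a b c d, R a b c d = -R b a c d) (hpair : ∀ a b c d, R a b c d = R c d a b)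
    (x y z w : ι) :
    contr ginv (R y z w ·) (A · x) = c * R y z w x := by
  have hR : (R y z w ·) = -(R · w y z) := funext fun p => by simp [hpair y z w p, hanti w p]
  rw [hR, map_neg, LinearMap.neg_apply, hA, hpair y z w x, hanti w x]
  ring

lemma IsContrEigen.smul_left (hA : IsContrEigen ginv A R c) (k : ℝ) :
    IsContrEigen ginv (k • A) R (k * c) := by
  intro x y z w
  rw [show ((k • A) · x) = k • (A · x) from rfl, map_smul, hA, smul_eq_mul, mul_assoc]

lemma IsContrEigen.smul_right (hA : IsContrEigen ginv A R c) (k : ℝ) :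
    IsContrEigen ginv A (k • R) c := by
  intro x y z w
  rw [show ((k • R) · y z w) = k • (R · y z w) from rfl, map_smul, LinearMap.smul_apply, hA]
  simp only [Pi.smul_apply, smul_eq_mul]
  ring

lemma IsInv.isContrEigen [DecidableEq ι] {g : ι → ι → ℝ} (hg : IsInv g ginv)
    (R : ι → ι → ι → ι → ℝ) : IsContrEigen ginv g R 1 :=
  fun x y z w => by rw [contr_metric hg, one_mul]

end Eigen

section Derivation

variable [Fintype ι] {ginv : ι → ι → ℝ} {R : ι → ι → ι → ι → ℝ}

/-- The Leibniz rule `B·(E∧T) = (B·E)∧T + E∧(B·T)`. -/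
lemma dotT_KN2_right (B : ι → ι → ι → ι → ℝ) (E T : ι → ι → ℝ) (h i j k l m : ι) :
    dotT ginv B (KN2 E T) h i j k l m =
      dotS ginv B E h k l m * T i j + E h k * dotS ginv B T i j l m
        + dotS ginv B E i j l m * T h k + E i j * dotS ginv B T h k l m
        - dotS ginv B E h j l m * T i k - E h j * dotS ginv B T i k l m
        - dotS ginv B E i k l m * T h j - E i k * dotS ginv B T h j l m := by
  simp only [dotT, dotS, KN2, Finset.sum_mul, Finset.mul_sum, ← Finset.sum_add_distrib,
    ← Finset.sum_sub_distrib]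
  exact Finset.sum_congr rfl fun p _ => Finset.sum_congr rfl fun q _ => by ring

lemma dotS_eq_zero_of_isContrEigen {A : ι → ι → ℝ} {c : ℝ} (hginv : ∀ i j, ginv i j = ginv j i)
    (hA : ∀ i j, A i j = A j i) (hanti : ∀ a b c d, R a b c d = -R b a c d)
    (hRA : IsContrEigen ginv A R c) (i j l m : ι) : dotS ginv R A i j l m = 0 := by
  have hA' : (A i ·) = (A · i) := funext fun p => hA i p
  rw [dotS_eq_contr, hA', contr_comm hginv, contr_comm hginv (A · i), hRA, hRA, hanti j i]
  ring

lemma dotT_KN2_right_eq_zero {E T : ι → ι → ℝ} {c d : ℝ} (hginv : ∀ i j, ginv i j = ginv j i)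
    (hE : ∀ i j, E i j = E j i) (hT : ∀ i j, T i j = T j i)
    (hanti : ∀ a b c d, R a b c d = -R b a c d)
    (hRE : IsContrEigen ginv E R c) (hRT : IsContrEigen ginv T R d) (h i j k l m : ι) :
    dotT ginv R (KN2 E T) h i j k l m = 0 := by
  simp only [dotT_KN2_right, dotS_eq_zero_of_isContrEigen hginv hE hanti hRE,
    dotS_eq_zero_of_isContrEigen hginv hT hanti hRT]
  ring

lemma dotT_KN2_left {E T : ι → ι → ℝ} {c d : ℝ}
    (hanti : ∀ a b c d, R a b c d = -R b a c d) (hpair : ∀ a b c d, R a b c d = R c d a b)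
    (hRE : IsContrEigen ginv E R c) (hRT : IsContrEigen ginv T R d) (h i j k l m : ι) :
    dotT ginv (KN2 E T) R h i j k l m = d * Tach4 E R h i j k l m + c * Tach4 T R h i j k l m := by
  simp only [dotT_eq_contr, KN2_fst_eq, map_add, map_sub, map_smul, smul_eq_mul,
    hRE, hRT, hRE.contr_snd hanti, hRT.contr_snd hanti,
    hRE.contr_thd hpair, hRT.contr_thd hpair, hRE.contr_fth hanti hpair,
    hRT.contr_fth hanti hpair, Tach4]
  ring

lemma dotT_weyl_right (n : ℕ) (g S : ι → ι → ℝ) (B R : ι → ι → ι → ι → ℝ) (κ : ℝ)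
    (h i j k l m : ι) :
    dotT ginv B (Weyl n g R S κ) h i j k l m = dotT ginv B R h i j k l m
      - 1 / ((n : ℝ) - 2) * dotT ginv B (KN2 g S) h i j k l m
      + κ / (2 * ((n : ℝ) - 1) * ((n : ℝ) - 2)) * dotT ginv B (KN2 g g) h i j k l m := by
  simp only [dotT, Weyl, Finset.mul_sum, ← Finset.sum_add_distrib, ← Finset.sum_sub_distrib]
  exact Finset.sum_congr rfl fun p _ => Finset.sum_congr rfl fun q _ => by ring

lemma dotT_weyl_left (n : ℕ) (g S : ι → ι → ℝ) (R T : ι → ι → ι → ι → ℝ) (κ : ℝ)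
    (h i j k l m : ι) :
    dotT ginv (Weyl n g R S κ) T h i j k l m = dotT ginv R T h i j k l m
      - 1 / ((n : ℝ) - 2) * dotT ginv (KN2 g S) T h i j k l m
      + κ / (2 * ((n : ℝ) - 1) * ((n : ℝ) - 2)) * dotT ginv (KN2 g g) T h i j k l m := by
  simp only [dotT, Weyl, Finset.mul_sum, ← Finset.sum_add_distrib, ← Finset.sum_sub_distrib]
  exact Finset.sum_congr rfl fun p _ => Finset.sum_congr rfl fun q _ => by ring

theorem dotT_weyl_sub_dotT_weyl {n : ℕ} (hn : 2 ≤ n) {g S : ι → ι → ℝ} {e κ : ℝ}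
    (hginv : ∀ i j, ginv i j = ginv j i) (hg : ∀ i j, g i j = g j i)
    (hS : ∀ i j, S i j = S j i)
    (hanti : ∀ a b c d, R a b c d = -R b a c d) (hpair : ∀ a b c d, R a b c d = R c d a b)
    (hRg : IsContrEigen ginv g R 1) (hRS : IsContrEigen ginv S R e) (hκ : κ = ((n : ℝ) - 1) * e)
    (h i j k l m : ι) :
    dotT ginv R (Weyl n g R S κ) h i j k l m - dotT ginv (Weyl n g R S κ) R h i j k l m =
      1 / ((n : ℝ) - 2) * Tach4 S R h i j k l m := by
  have hn1 : (n : ℝ) - 1 ≠ 0 := by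
    have : (2 : ℝ) ≤ n := by exact_mod_cast hn
    linarith
  rw [dotT_weyl_right, dotT_weyl_left, dotT_KN2_right_eq_zero hginv hg hS hanti hRg hRS,
    dotT_KN2_right_eq_zero hginv hg hg hanti hRg hRg, dotT_KN2_left hanti hpair hRg hRS,
    dotT_KN2_left hanti hpair hRg hRg, hκ]
  field_simp
  ring

end Derivation

section Fibre

variable [Fintype ι] {g ginv : ι → ι → ℝ}

lemma Ricci_symm {R : ι → ι → ι → ι → ℝ} (hginv : ∀ i j, ginv i j = ginv j i)
    (hanti : ∀ a b c d, R a b c d = -R b a c d) (hpair : ∀ a b c d, R a b c d = R c d a b)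
    (i j : ι) : Ricci ginv R i j = Ricci ginv R j i := by
  simp only [Ricci]
  rw [Finset.sum_comm]
  refine Finset.sum_congr rfl fun q _ => Finset.sum_congr rfl fun p _ => ?_
  rw [hginv, hpair p i j q]
  congr 1
  linarith [hanti j q p i, hpair q j p i, hanti p i q j, hpair i p q j]

lemma scal_sub_smul (ginv S g : ι → ι → ℝ) (μ : ℝ) :
    scal ginv (S - μ • g) = scal ginv S - μ * scal ginv g := by
  simp only [scal, Pi.sub_apply, Pi.smul_apply, smul_eq_mul, mul_sub, Finset.sum_sub_distrib,
    Finset.mul_sum, mul_left_comm μ]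

variable [DecidableEq ι]

lemma IsInv.mul_eq_one (hg : IsInv g ginv) : Matrix.of g * Matrix.of ginv = 1 := by
  ext i j
  simp [Matrix.mul_apply, Matrix.one_apply, hg.1 i j]

lemma IsInv.inv_symm (hg : IsInv g ginv) (hsymm : ∀ i j, g i j = g j i) (i j : ι) :
    ginv i j = ginv j i := by
  have hgT : (Matrix.of g).transpose = Matrix.of g := Matrix.ext fun i j => hsymm j i
  have hinv : (Matrix.of g)⁻¹ = Matrix.of ginv := Matrix.inv_eq_right_inv hg.mul_eq_one
  have hginvT : (Matrix.of ginv).transpose = Matrix.of ginv := by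
    rw [← hinv, Matrix.transpose_nonsing_inv, hgT]
  exact congrFun (congrFun hginvT j) i

lemma scal_metric (hg : IsInv g ginv) (hsymm : ∀ i j, g i j = g j i) :
    scal ginv g = Fintype.card ι := by
  have hdiag : ∀ i, ∑ j, ginv i j * g i j = 1 := fun i => by simpa [hsymm i] using hg.2 i i
  simp [scal, hdiag]

lemma isContrEigen_of_SR2 {S : ι → ι → ℝ} {R : ι → ι → ι → ι → ℝ} {κ lam : ℝ}
    (hg : IsInv g ginv) (hgsymm : ∀ i j, g i j = g j i) (hS : ∀ i j, S i j = S j i)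
    (hSR2 : ∀ x y z w, contr ginv (R · y z w) (S · x) =
      κ * R x y z w + lam * (g y z * S x w - g y w * S x z) - lam * κ * Gten g x y z w)
    (μ : ℝ) : IsContrEigen ginv (S - μ • g) (R - lam • Gten g) (κ - μ) := by
  intro x y z w
  have hgS : ∀ v, contr ginv (g · v) (S · x) = S x v := fun v => by
    rw [contr_comm (hg.inv_symm hgsymm), contr_metric hg, hS]
  rw [show ((S - μ • g) · x) = (S · x) - μ • (g · x) from rfl,
    show ((R - lam • Gten g) · y z w) = (R · y z w) - lam • (Gten g · y z w) from rfl, Gten_fst_eq]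
  simp only [map_sub, map_smul, LinearMap.sub_apply, LinearMap.smul_apply, smul_eq_mul, hSR2,
    contr_metric hg, hgS, Pi.sub_apply, Pi.smul_apply, Gten]
  ring

end Fibre

lemma warping_sq_affine {a b t F F' F'' : ℝ} (hF0 : F ≠ 0) (hF : F = (a * t + b) ^ 2)
    (hF' : F' = 2 * a * (a * t + b)) (hF'' : F'' = 2 * a ^ 2) :
    F'' - F' ^ 2 / (2 * F) = 0 ∧ F' ^ 2 / (4 * F) = a ^ 2 := by
  have hab : a * t + b ≠ 0 := fun h => hF0 (by rw [hF, h]; ring)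
  subst hF hF' hF''
  constructor <;> field_simp <;> ring

section Warped

variable {m : ℕ} {ε F : ℝ} {gt gtinv : Fin m → Fin m → ℝ}

lemma contr_wmetInv (X Y : Option (Fin m) → ℝ) :
    contr (wmetInv m ε F gtinv) X Y =
      ε * (X none * Y none) + contr gtinv (fun u => X (some u)) (fun u => Y (some u)) / F := by
  simp only [contr_apply, Fintype.sum_option, wmetInv, Finset.sum_div]
  simp [div_mul_eq_mul_div]

lemma scal_wmetInv (S : Option (Fin m) → Option (Fin m) → ℝ) :
    scal (wmetInv m ε F gtinv) S =
      ε * S none none + scal gtinv (fun u v => S (some u) (some v)) / F := by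
  simp only [scal, Fintype.sum_option, wmetInv, Finset.sum_div]
  simp [div_mul_eq_mul_div]

def zeroExt (R : Fin m → Fin m → Fin m → Fin m → ℝ) :
    Option (Fin m) → Option (Fin m) → Option (Fin m) → Option (Fin m) → ℝ :=
  fun h i j k => match h, i, j, k with
  | some a, some b, some c, some d => R a b c d
  | _, _, _, _ => 0

lemma IsContrEigen.zeroExt_wmetInv {R : Fin m → Fin m → Fin m → Fin m → ℝ}
    {A : Fin m → Fin m → ℝ} {c : ℝ} (hRA : IsContrEigen gtinv A R c)
    {Aext : Option (Fin m) → Option (Fin m) → ℝ} (hnone : ∀ u, Aext (some u) none = 0)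
    (hsome : ∀ u v, Aext (some u) (some v) = A u v) :
    IsContrEigen (wmetInv m ε F gtinv) Aext (zeroExt R) (c / F) := by
  intro x y z w
  rw [contr_wmetInv]
  rcases y with _ | y <;> rcases z with _ | z <;> rcases w with _ | w <;>
    simp only [zeroExt, zero_mul, mul_zero, zero_add, ← Pi.zero_def, map_zero,
      LinearMap.zero_apply, zero_div]
  rcases x with _ | x
  · simp only [hnone, ← Pi.zero_def, map_zero, zero_div, mul_zero]
  · simp only [hsome, hRA]
    ring

lemma wcurv_zero_eq_zeroExt (F D4F : ℝ) (gt : Fin m → Fin m → ℝ)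
    (Rt : Fin m → Fin m → Fin m → Fin m → ℝ) :
    wcurv m F 0 D4F gt Rt = zeroExt (F • (Rt - D4F • Gten gt)) := by
  funext a b c d
  rcases a with _ | a <;> rcases b with _ | b <;> rcases c with _ | c <;> rcases d with _ | d <;>
    simp [wcurv, zeroExt]

lemma wmet_symm (hgt : ∀ i j, gt i j = gt j i) (i j : Option (Fin m)) :
    wmet m ε F gt i j = wmet m ε F gt j i := by
  rcases i with _ | u <;> rcases j with _ | v <;> simp [wmet, hgt]

lemma wmetInv_symm (hgt : ∀ i j, gtinv i j = gtinv j i) (i j : Option (Fin m)) :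
    wmetInv m ε F gtinv i j = wmetInv m ε F gtinv j i := by
  rcases i with _ | u <;> rcases j with _ | v <;> simp [wmetInv, hgt]

lemma wric_symm {T11 trT D4F : ℝ} {St : Fin m → Fin m → ℝ} (hgt : ∀ i j, gt i j = gt j i)
    (hSt : ∀ i j, St i j = St j i) (i j : Option (Fin m)) :
    wric m F T11 trT D4F gt St i j = wric m F T11 trT D4F gt St j i := by
  rcases i with _ | u <;> rcases j with _ | v <;> simp [wric, hgt, hSt]

lemma wcurv_anti {T11 D4F : ℝ} {Rt : Fin m → Fin m → Fin m → Fin m → ℝ}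
    (hRt : ∀ a b c d, Rt a b c d = -Rt b a c d) (a b c d : Option (Fin m)) :
    wcurv m F T11 D4F gt Rt a b c d = -wcurv m F T11 D4F gt Rt b a c d := by
  rcases a with _ | a <;> rcases b with _ | b <;> rcases c with _ | c <;> rcases d with _ | d <;>
    simp only [wcurv, neg_zero, neg_mul, neg_neg]
  rw [hRt, Gten, Gten]
  ring

lemma wcurv_pair {T11 D4F : ℝ} {Rt : Fin m → Fin m → Fin m → Fin m → ℝ}
    (hgt : ∀ i j, gt i j = gt j i) (hRt : ∀ a b c d, Rt a b c d = Rt c d a b)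
    (a b c d : Option (Fin m)) :
    wcurv m F T11 D4F gt Rt a b c d = wcurv m F T11 D4F gt Rt c d a b := by
  rcases a with _ | a <;> rcases b with _ | b <;> rcases c with _ | c <;> rcases d with _ | d <;>
    simp only [wcurv] <;> try rw [hgt]
  simp only [Gten]
  rw [hRt, hgt c b, hgt d a, hgt c a, hgt d b]
  ring

lemma wcurv_isContrEigen_wmet (hF : F ≠ 0) (hginv : IsInv gt gtinv) (lam : ℝ)
    (Rt : Fin m → Fin m → Fin m → Fin m → ℝ) :
    IsContrEigen (wmetInv m ε F gtinv) (wmet m ε F gt) (wcurv m F 0 lam gt Rt) 1 := by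
  have h := ((hginv.isContrEigen (F • (Rt - lam • Gten gt))).smul_left F).zeroExt_wmetInv
    (ε := ε) (F := F) (Aext := wmet m ε F gt) (fun _ => rfl) (fun _ _ => rfl)
  rwa [mul_one, div_self hF, ← wcurv_zero_eq_zeroExt] at h

lemma wcurv_isContrEigen_wric {lam e : ℝ} {St : Fin m → Fin m → ℝ}
    {Rt : Fin m → Fin m → Fin m → Fin m → ℝ}
    (hfib : IsContrEigen gtinv (St - (((m : ℝ) - 1) * lam) • gt) (Rt - lam • Gten gt) e) :
    IsContrEigen (wmetInv m ε F gtinv) (wric m F 0 0 lam gt St) (wcurv m F 0 lam gt Rt)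
      (e / F) := by
  rw [wcurv_zero_eq_zeroExt]
  exact (hfib.smul_right F).zeroExt_wmetInv (fun _ => rfl) (fun u v => by simp [wric])

lemma scal_wric (hginv : IsInv gt gtinv) (hgt : ∀ i j, gt i j = gt j i)
    (lam : ℝ) (St : Fin m → Fin m → ℝ) :
    scal (wmetInv m ε F gtinv) (wric m F 0 0 lam gt St) =
      (scal gtinv St - m * (((m : ℝ) - 1) * lam)) / F := by
  have hfib : (fun u v => wric m F 0 0 lam gt St (some u) (some v))
      = St - (((m : ℝ) - 1) * lam) • gt := funext₂ fun u v => by simp [wric]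
  rw [scal_wmetInv, hfib, scal_sub_smul, scal_metric hginv hgt, Fintype.card_fin]
  simp [wric]
  ring

end Warped

theorem stmt16_general {m : ℕ} (hm : 3 ≤ m) (ε : ℝ)
    (a b t : ℝ) (hpos : 0 < (a * t + b) ^ 2)
    (gt gtinv : Fin m → Fin m → ℝ)
    (hgsym : ∀ i j, gt i j = gt j i) (hginv : IsInv gt gtinv)
    (Rt : Fin m → Fin m → Fin m → Fin m → ℝ) (hRt : IsCurv Rt)
    (St : Fin m → Fin m → ℝ) (hSt : St = Ricci gtinv Rt)
    (κt : ℝ) (hκt : κt = scal gtinv St)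
    (hSR2 : ∀ μ' β γ δ, (∑ p, ∑ q, gtinv p q * St q μ' * Rt p β γ δ) =
      κt / (m : ℝ) * Rt μ' β γ δ
      + ε * a ^ 2 * (gt β γ * St μ' δ - gt β δ * St μ' γ)
      - ε * κt * a ^ 2 / (m : ℝ) * Gten gt μ' β γ δ)
    (F F' F'' T11 trT D4F : ℝ)
    (hFdef : F = (a * t + b) ^ 2) (hF' : F' = 2 * a * (a * t + b)) (hF'' : F'' = 2 * a ^ 2)
    (hT11 : T11 = F'' - F' ^ 2 / (2 * F)) (htrT : trT = ε * T11)
    (hD4F : D4F = ε * F' ^ 2 / (4 * F))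
    (g ginv : Option (Fin m) → Option (Fin m) → ℝ)
    (hg : g = wmet m ε F gt) (hgi : ginv = wmetInv m ε F gtinv)
    (R : Option (Fin m) → Option (Fin m) → Option (Fin m) → Option (Fin m) → ℝ)
    (hRdef : R = wcurv m F T11 D4F gt Rt)
    (S : Option (Fin m) → Option (Fin m) → ℝ) (hSdef : S = wric m F T11 trT D4F gt St)
    (κ : ℝ) (hκ : κ = scal ginv S)
    (C : Option (Fin m) → Option (Fin m) → Option (Fin m) → Option (Fin m) → ℝ)
    (hCdef : C = Weyl (m + 1) g R S κ) :
    ∀ h i j k l m', dotT ginv R C h i j k l m' - dotT ginv C R h i j k l m' =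
      1 / ((m : ℝ) - 1) * Tach4 S R h i j k l m' := by
  have hF : F ≠ 0 := hFdef ▸ hpos.ne'
  obtain ⟨hT, hΔ⟩ := warping_sq_affine hF hFdef hF' hF''
  have hT0 : T11 = 0 := hT11.trans hT
  have hD : D4F = ε * a ^ 2 := by rw [hD4F, mul_div_assoc, hΔ]
  have htr0 : trT = 0 := by rw [htrT, hT0, mul_zero]
  subst hT0 hD htr0 hg hgi hRdef hSdef hCdef
  have hgtinv := hginv.inv_symm hgsym
  have hStsymm : ∀ i j, St i j = St j i := hSt ▸ Ricci_symm hgtinv hRt.1 hRt.2.1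
  have hfib := isContrEigen_of_SR2 (κ := κt / m) (lam := ε * a ^ 2) hginv hgsym hStsymm
    (fun x y z w => by
      rw [contr_apply]
      convert hSR2 x y z w using 1
      · exact Finset.sum_congr rfl fun p _ => Finset.sum_congr rfl fun q _ => by ring
      · ring) (((m : ℝ) - 1) * (ε * a ^ 2))
  have hκ' : κ = (((m + 1 : ℕ) : ℝ) - 1) * ((κt / m - ((m : ℝ) - 1) * (ε * a ^ 2)) / F) := by
    have hm0 : (m : ℝ) ≠ 0 := Nat.cast_ne_zero.mpr (by omega)
    rw [hκ, scal_wric hginv hgsym, ← hκt]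
    field_simp
    push_cast
    ring
  intro h i j k l m'
  convert dotT_weyl_sub_dotT_weyl (by omega) (wmetInv_symm hgtinv) (wmet_symm hgsym)
    (wric_symm hgsym hStsymm) (wcurv_anti hRt.1) (wcurv_pair hgsym hRt.2.1)
    (wcurv_isContrEigen_wmet hF hginv _ _) (wcurv_isContrEigen_wric hfib) hκ' h i j k l m'
    using 2
  push_cast
  ring

/-- Theorem 4.2: a warped product with 1-dimensional base, warping function
`F(x¹) = (a x¹ + b)²`, and fibre satisfying condition (SR2) (with the same `a`),
satisfies `R·C - C·R = (1/(n-2)) Q(S,R)`.  The warped product is encoded pointwise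
(point `x¹ = t`) through its curvature components (W1), (W2); `m = n - 1`. -/
theorem stmt16 {m : ℕ} (hm : 3 ≤ m) (ε : ℝ) (hε : ε = 1 ∨ ε = -1)
    (a b t : ℝ) (hpos : 0 < (a * t + b) ^ 2)
    (gt gtinv : Fin m → Fin m → ℝ)
    (hgsym : ∀ i j, gt i j = gt j i) (hginv : IsInv gt gtinv)
    (Rt : Fin m → Fin m → Fin m → Fin m → ℝ) (hRt : IsCurv Rt)
    (St : Fin m → Fin m → ℝ) (hSt : St = Ricci gtinv Rt)
    (κt : ℝ) (hκt : κt = scal gtinv St)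
    (hSR2 : ∀ μ' β γ δ, (∑ p, ∑ q, gtinv p q * St q μ' * Rt p β γ δ) =
      κt / (m : ℝ) * Rt μ' β γ δ
      + ε * a ^ 2 * (gt β γ * St μ' δ - gt β δ * St μ' γ)
      - ε * κt * a ^ 2 / (m : ℝ) * Gten gt μ' β γ δ)
    (F F' F'' T11 trT D4F : ℝ)
    (hFdef : F = (a * t + b) ^ 2) (hF' : F' = 2 * a * (a * t + b)) (hF'' : F'' = 2 * a ^ 2)
    (hT11 : T11 = F'' - F' ^ 2 / (2 * F)) (htrT : trT = ε * T11)
    (hD4F : D4F = ε * F' ^ 2 / (4 * F))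
    (g ginv : Option (Fin m) → Option (Fin m) → ℝ)
    (hg : g = wmet m ε F gt) (hgi : ginv = wmetInv m ε F gtinv)
    (R : Option (Fin m) → Option (Fin m) → Option (Fin m) → Option (Fin m) → ℝ)
    (hRdef : R = wcurv m F T11 D4F gt Rt)
    (S : Option (Fin m) → Option (Fin m) → ℝ) (hSdef : S = wric m F T11 trT D4F gt St)
    (κ : ℝ) (hκ : κ = scal ginv S)
    (C : Option (Fin m) → Option (Fin m) → Option (Fin m) → Option (Fin m) → ℝ)
    (hCdef : C = Weyl (m + 1) g R S κ) :
    ∀ h i j k l m', dotT ginv R C h i j k l m' - dotT ginv C R h i j k l m' =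
      1 / ((m : ℝ) - 1) * Tach4 S R h i j k l m' :=
  stmt16_general hm ε a b t hpos gt gtinv hgsym hginv Rt hRt St hSt κt hκt hSR2 F F' F'' T11 trT D4F
    hFdef hF' hF'' hT11 htrT hD4F g ginv hg hgi R hRdef S hSdef κ hκ C hCdef
end
end
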